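/- arXiv:2203.00863 — 6 statements merged into one kernel-verified Lean document; each statement's English description precedes it below -/
import Mathlib

section
/- Let φ : (0,∞) → [0,∞) be convex with φ(1) = 0 and strictly convex at 1, and let P, Q be probability measures with λ-densities f_P, f_Q. If P and Q are mutually singular (i.e. λ({f_P > 0} ∩ {f_Q > 0}) = 0), then D_φ(P,Q) = φ(0) + φ*(0). Conversely, if φ(0) + φ*(0) < ∞ and D_φ(P,Q) = φ(0) + φ*(0), then P and Q are mutually singular. -/
/-! With `S = {f_P > 0} ∩ {f_Q > 0}`, the two boundary terms are `φ(0)·(1 - Q S)` and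
`φ*(0)·(1 - P S)`, so `D_φ(P,Q) = φ(0) + φ*(0)` as soon as `λ S = 0`. Conversely, convexity
squeezes `φ` under the line `t ↦ φ(0) + t·φ*(0)` (the secant slopes from `(0, φ(0))` increase
to `φ*(0)`), and strict convexity at `1` makes this strict at every `t > 0`. If `Q S > 0`,
integrating over `S` gives `∫_S φ(f_P/f_Q) dQ < φ(0)·Q S + φ*(0)·P S`, hence `D_φ < φ(0) + φ*(0)`. -/

open Set Filter MeasureTheory
open scoped ENNReal

/-- `φ` is strictly convex at the point `1`. -/
def StrictlyConvexAtOne (φ : ℝ → ℝ) : Prop :=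
  ∀ ⦃x y a b : ℝ⦄, x ∈ Set.Ioi (0:ℝ) → y ∈ Set.Ioi (0:ℝ) → x ≠ y →
    0 < a → 0 < b → a + b = 1 → a * x + b * y = 1 → φ 1 < a * φ x + b * φ y

/-- The Csiszár–Ali–Silvey–Morimoto φ-divergence
`D_φ(P,Q) := ∫_{{f_P·f_Q > 0}} φ(f_P/f_Q) dQ + φ(0)·Q[{f_P = 0}] + φ*(0)·P[{f_Q = 0}]`
of `P := λ.withDensity f_P` from `Q := λ.withDensity f_Q`; the boundary values
`φ0 = φ(0) := lim_{t↓0} φ(t)` and `φstar0 = φ*(0) := lim_{t→∞} φ(t)/t` are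
elements of `[0,∞]`, and the conventions `φ(0)·0 := 0`, `φ*(0)·0 := 0` hold
automatically in `ℝ≥0∞`. -/
noncomputable def phiDiv {𝒳 : Type*} [MeasurableSpace 𝒳]
    (φ : ℝ → ℝ) (φ0 φstar0 : ℝ≥0∞)
    (lam : Measure 𝒳) (fP fQ : 𝒳 → ℝ≥0∞) : ℝ≥0∞ :=
  (∫⁻ x in {x | 0 < fP x ∧ 0 < fQ x},
      ENNReal.ofReal (φ ((fP x / fQ x).toReal)) ∂(lam.withDensity fQ))
    + φ0 * (lam.withDensity fQ) {x | fP x = 0}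
    + φstar0 * (lam.withDensity fP) {x | fQ x = 0}

open Topology

section Real

variable {φ : ℝ → ℝ} {c₀ c₁ : ℝ}

lemma ConvexOn.slope_from_limit_at_zero_mono (hφ : ConvexOn ℝ (Ioi 0) φ)
    (h₀ : Tendsto φ (𝓝[>] 0) (𝓝 c₀)) {t s : ℝ} (ht : 0 < t) (hts : t ≤ s) :
    (φ t - c₀) / t ≤ (φ s - c₀) / s := by
  have slope_tendsto : ∀ u ≠ 0,
      Tendsto (fun ε => (φ u - φ ε) / (u - ε)) (𝓝[>] 0) (𝓝 ((φ u - c₀) / u)) := fun u hu => by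
    have h := (tendsto_const_nhds (x := φ u)).sub h₀ |>.div
      ((tendsto_const_nhds (x := u)).sub (tendsto_id.mono_left nhdsWithin_le_nhds))
      (by simpa using hu)
    rw [sub_zero] at h
    exact h
  refine le_of_tendsto_of_tendsto (slope_tendsto t ht.ne') (slope_tendsto s (ht.trans_le hts).ne') ?_
  filter_upwards [self_mem_nhdsWithin, mem_nhdsWithin_of_mem_nhds (Iio_mem_nhds ht)]
    with ε (hε : 0 < ε) (hεt : ε < t)
  exact hφ.secant_mono hε ht (ht.trans_le hts) hεt.ne' (hεt.trans_le hts).ne' hts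

lemma ConvexOn.le_add_mul_of_tendsto (hφ : ConvexOn ℝ (Ioi 0) φ)
    (h₀ : Tendsto φ (𝓝[>] 0) (𝓝 c₀)) (h₁ : Tendsto (fun t => φ t / t) atTop (𝓝 c₁))
    {t : ℝ} (ht : 0 < t) : φ t ≤ c₀ + t * c₁ := by
  have hslope : Tendsto (fun s => (φ s - c₀) / s) atTop (𝓝 c₁) := by
    simpa [sub_div] using h₁.sub (tendsto_const_nhds.div_atTop tendsto_id)
  have : (φ t - c₀) / t ≤ c₁ :=
    ge_of_tendsto hslope ((eventually_ge_atTop t).mono fun s hs =>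
      hφ.slope_from_limit_at_zero_mono h₀ ht hs)
  rw [div_le_iff₀ ht] at this
  linarith

lemma exists_pos_mem_openSegment {p t : ℝ} (hp : 0 < p) (ht : 0 < t) (hpt : p ≠ t) :
    ∃ y, 0 < y ∧ t ∈ openSegment ℝ p y := by
  rcases hpt.lt_or_gt with hlt | hgt
  · exact ⟨t + 1, by linarith, by rw [openSegment_eq_Ioo (by linarith)]; constructor <;> linarith⟩
  · refine ⟨t / 2, by linarith, ?_⟩
    rw [openSegment_symm, openSegment_eq_Ioo (by linarith)]
    constructor <;> linarith

lemma ConvexOn.lt_add_mul_of_lt_add_mul (hφ : ConvexOn ℝ (Ioi 0) φ)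
    (hle : ∀ u, 0 < u → φ u ≤ c₀ + u * c₁) {p : ℝ} (hp : 0 < p) (hlt : φ p < c₀ + p * c₁)
    {t : ℝ} (ht : 0 < t) : φ t < c₀ + t * c₁ := by
  rcases eq_or_ne p t with rfl | hpt
  · exact hlt
  obtain ⟨y, hy, a, b, ha, hb, hab, rfl⟩ := exists_pos_mem_openSegment hp ht hpt
  have hconv : φ (a * p + b * y) ≤ a * φ p + b * φ y := hφ.2 hp hy ha.le hb.le hab
  have hp' : a * φ p < a * (c₀ + p * c₁) := mul_lt_mul_of_pos_left hlt ha
  have hy' : b * φ y ≤ b * (c₀ + y * c₁) := mul_le_mul_of_nonneg_left (hle y hy) hb.le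
  calc φ (a * p + b * y) < a * (c₀ + p * c₁) + b * (c₀ + y * c₁) := by linarith
    _ = c₀ + (a * p + b * y) * c₁ := by linear_combination c₀ * hab

lemma StrictlyConvexAtOne.lt_add_mul (hφ : StrictlyConvexAtOne φ)
    (hle : ∀ u, 0 < u → φ u ≤ c₀ + u * c₁) : φ 1 < c₀ + 1 * c₁ := by
  have h := hφ (x := 1 / 2) (y := 3 / 2) (a := 1 / 2) (b := 1 / 2)
    (by norm_num) (by norm_num) (by norm_num) (by norm_num) (by norm_num) (by norm_num)
    (by norm_num)
  linarith [hle (1 / 2) (by norm_num), hle (3 / 2) (by norm_num)]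

lemma tendsto_toReal_of_tendsto_ofReal {ι : Type*} {l : Filter ι} {f : ι → ℝ} {a : ℝ≥0∞}
    (hf : ∀ᶠ i in l, 0 ≤ f i) (h : Tendsto (fun i => ENNReal.ofReal (f i)) l (𝓝 a))
    (ha : a ≠ ⊤) : Tendsto f l (𝓝 a.toReal) :=
  ((ENNReal.tendsto_toReal ha).comp h).congr' (hf.mono fun _ hi => ENNReal.toReal_ofReal hi)


lemma ofReal_lt_add_mul_of_tendsto (hφ : ConvexOn ℝ (Ioi 0) φ)
    (hφ_nonneg : ∀ t ∈ Ioi (0 : ℝ), 0 ≤ φ t) (hφ_strict : StrictlyConvexAtOne φ)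
    {a b : ℝ≥0∞} (ha : a ≠ ⊤) (hb : b ≠ ⊤)
    (h₀ : Tendsto (fun t => ENNReal.ofReal (φ t)) (𝓝[>] 0) (𝓝 a))
    (h₁ : Tendsto (fun t => ENNReal.ofReal (φ t / t)) atTop (𝓝 b))
    {r : ℝ≥0∞} (hr₀ : 0 < r) (hr : r < ⊤) :
    ENNReal.ofReal (φ r.toReal) < a + r * b := by
  have h₀' := tendsto_toReal_of_tendsto_ofReal
    (eventually_mem_nhdsWithin.mono hφ_nonneg) h₀ ha
  have h₁' := tendsto_toReal_of_tendsto_ofReal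
    ((eventually_gt_atTop 0).mono fun t ht => div_nonneg (hφ_nonneg t ht) ht.le) h₁ hb
  have hle := fun u (hu : 0 < u) => hφ.le_add_mul_of_tendsto h₀' h₁' hu
  have ht : 0 < r.toReal := ENNReal.toReal_pos hr₀.ne' hr.ne
  have hlt := hφ.lt_add_mul_of_lt_add_mul hle one_pos (hφ_strict.lt_add_mul hle) ht
  calc ENNReal.ofReal (φ r.toReal) < ENNReal.ofReal (a.toReal + r.toReal * b.toReal) :=
        ENNReal.ofReal_lt_ofReal_iff'.2 ⟨hlt, (hφ_nonneg _ ht).trans_lt hlt⟩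
    _ = a + r * b := by
        rw [ENNReal.ofReal_add (by positivity) (by positivity), ENNReal.ofReal_mul ht.le,
          ENNReal.ofReal_toReal ha, ENNReal.ofReal_toReal hb, ENNReal.ofReal_toReal hr.ne]

end Real

lemma ENNReal.add_mul_tsub_add_mul_tsub_lt {I a b p q : ℝ≥0∞} (ha : a ≠ ⊤) (hb : b ≠ ⊤)
    (hq : q ≤ 1) (hp : p ≤ 1) (hI : I < a * q + p * b) :
    I + a * (1 - q) + b * (1 - p) < a + b := by
  have hA : a * (1 - q) ≠ ⊤ := ENNReal.mul_ne_top ha (ENNReal.sub_ne_top ENNReal.one_ne_top)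
  have hB : b * (1 - p) ≠ ⊤ := ENNReal.mul_ne_top hb (ENNReal.sub_ne_top ENNReal.one_ne_top)
  calc I + a * (1 - q) + b * (1 - p) < a * q + p * b + a * (1 - q) + b * (1 - p) :=
        ENNReal.add_lt_add_right hB (ENNReal.add_lt_add_right hA hI)
    _ = a * (q + (1 - q)) + b * (p + (1 - p)) := by ring
    _ = a + b := by rw [add_tsub_cancel_of_le hq, add_tsub_cancel_of_le hp, mul_one, mul_one]

section WithDensity

variable {α : Type*} [MeasurableSpace α] {μ : Measure α} {f g : α → ℝ≥0∞}

lemma withDensity_setOf_eq_zero (hf : Measurable f) (hg : Measurable g)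
    [IsProbabilityMeasure (μ.withDensity g)] :
    μ.withDensity g {x | f x = 0} = 1 - μ.withDensity g {x | 0 < f x ∧ 0 < g x} := by
  have hpos : {x | 0 < f x ∧ 0 < g x} =ᵐ[μ.withDensity g] {x | 0 < f x} := by
    filter_upwards [(ae_withDensity_iff hg).2 (ae_of_all _ fun _ hx => hx)] with x hx
    change (0 < f x ∧ 0 < g x) = (0 < f x)
    simp [pos_iff_ne_zero, hx]
  rw [measure_congr hpos, ← prob_compl_eq_one_sub (measurableSet_lt measurable_const hf)]
  congr
  ext x
  simp [pos_iff_ne_zero]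

lemma withDensity_setOf_pos_and_pos_eq_zero_iff (hg : Measurable g) :
    μ.withDensity g {x | 0 < f x ∧ 0 < g x} = 0 ↔ μ {x | 0 < f x ∧ 0 < g x} = 0 := by
  rw [withDensity_apply_eq_zero hg, inter_eq_right.2 fun x hx => hx.2.ne']

lemma ae_lt_top_of_isFiniteMeasure_withDensity (hg : Measurable g)
    [IsFiniteMeasure (μ.withDensity g)] : ∀ᵐ x ∂μ, g x < ⊤ :=
  ae_lt_top hg (by
    rw [← setLIntegral_univ, ← withDensity_apply _ MeasurableSet.univ]
    exact measure_ne_top _ _)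

lemma setLIntegral_div_withDensity (hf : Measurable f) (hg : Measurable g)
    [IsFiniteMeasure (μ.withDensity g)] {s : Set α} (hs : MeasurableSet s)
    (hgs : ∀ x ∈ s, g x ≠ 0) :
    ∫⁻ x in s, f x / g x ∂μ.withDensity g = μ.withDensity f s := by
  rw [setLIntegral_withDensity_eq_setLIntegral_mul μ hg (g := fun x => f x / g x) (by fun_prop) hs, withDensity_apply _ hs]
  refine setLIntegral_congr_fun_ae hs ?_
  filter_upwards [ae_lt_top_of_isFiniteMeasure_withDensity hg] with x hx hxs
  exact ENNReal.mul_div_cancel (hgs x hxs) hx.ne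

lemma setLIntegral_lt_of_lt_add_mul {F : ℝ≥0∞ → ℝ≥0∞} {a b : ℝ≥0∞}
    (hF : ∀ r, 0 < r → r < ⊤ → F r < a + r * b) (hf : Measurable f) (hg : Measurable g)
    [IsFiniteMeasure (μ.withDensity f)] [IsFiniteMeasure (μ.withDensity g)]
    (hS : μ.withDensity g {x | 0 < f x ∧ 0 < g x} ≠ 0)
    (hS_fin : ∫⁻ x in {x | 0 < f x ∧ 0 < g x}, F (f x / g x) ∂μ.withDensity g ≠ ⊤) :
    ∫⁻ x in {x | 0 < f x ∧ 0 < g x}, F (f x / g x) ∂μ.withDensity g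
      < a * μ.withDensity g {x | 0 < f x ∧ 0 < g x}
        + μ.withDensity f {x | 0 < f x ∧ 0 < g x} * b := by
  have hSm : MeasurableSet {x | 0 < f x ∧ 0 < g x} :=
    (measurableSet_lt measurable_const hf).inter (measurableSet_lt measurable_const hg)
  have hfin : ∀ᵐ x ∂μ.withDensity g, f x < ⊤ ∧ g x < ⊤ :=
    withDensity_absolutelyContinuous μ g |>.ae_le <|
      (ae_lt_top_of_isFiniteMeasure_withDensity hf).and
        (ae_lt_top_of_isFiniteMeasure_withDensity hg)
  calc _ < ∫⁻ x in {x | 0 < f x ∧ 0 < g x}, (a + f x / g x * b) ∂μ.withDensity g := by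
        refine setLIntegral_strict_mono hSm hS (by fun_prop) hS_fin ?_
        filter_upwards [hfin] with x ⟨hf_top, hg_top⟩ ⟨hf_pos, hg_pos⟩
        exact hF _ (ENNReal.div_pos hf_pos.ne' hg_top.ne) (ENNReal.div_lt_top hf_top.ne hg_pos.ne')
    _ = _ := by
        rw [lintegral_add_left measurable_const, setLIntegral_const,
          lintegral_mul_const b (by fun_prop : Measurable fun x => f x / g x), setLIntegral_div_withDensity hf hg hSm fun _ hx => hx.2.ne']

end WithDensity

lemma phiDiv_eq_setLIntegral_add {𝒳 : Type*} [MeasurableSpace 𝒳] {lam : Measure 𝒳}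
    {fP fQ : 𝒳 → ℝ≥0∞} (hfP : Measurable fP) (hfQ : Measurable fQ)
    [IsProbabilityMeasure (lam.withDensity fP)] [IsProbabilityMeasure (lam.withDensity fQ)]
    (φ : ℝ → ℝ) (φ0 φstar0 : ℝ≥0∞) :
    phiDiv φ φ0 φstar0 lam fP fQ =
      ∫⁻ x in {x | 0 < fP x ∧ 0 < fQ x},
          ENNReal.ofReal (φ ((fP x / fQ x).toReal)) ∂lam.withDensity fQ
        + φ0 * (1 - lam.withDensity fQ {x | 0 < fP x ∧ 0 < fQ x})
        + φstar0 * (1 - lam.withDensity fP {x | 0 < fP x ∧ 0 < fQ x}) := by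
  have hcomm : {x | 0 < fQ x ∧ 0 < fP x} = {x | 0 < fP x ∧ 0 < fQ x} := by
    simp only [and_comm]
  rw [phiDiv, withDensity_setOf_eq_zero hfP hfQ, withDensity_setOf_eq_zero hfQ hfP, hcomm]

theorem phiDiv_eq_bound_iff_singular_general {𝒳 : Type*} [MeasurableSpace 𝒳]
    (lam : Measure 𝒳)
    (fP fQ : 𝒳 → ℝ≥0∞) (hfP : Measurable fP) (hfQ : Measurable fQ)
    [IsProbabilityMeasure (lam.withDensity fP)]
    [IsProbabilityMeasure (lam.withDensity fQ)]
    (φ : ℝ → ℝ) (hconv : ConvexOn ℝ (Set.Ioi (0:ℝ)) φ)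
    (hnonneg : ∀ t ∈ Set.Ioi (0:ℝ), 0 ≤ φ t)
    (hstrict : StrictlyConvexAtOne φ)
    (φ0 φstar0 : ℝ≥0∞)
    (hφ0 : Tendsto (fun t : ℝ => ENNReal.ofReal (φ t))
      (nhdsWithin 0 (Set.Ioi (0:ℝ))) (nhds φ0))
    (hφstar0 : Tendsto (fun t : ℝ => ENNReal.ofReal (φ t / t)) atTop (nhds φstar0)) :
    (lam ({x | 0 < fP x} ∩ {x | 0 < fQ x}) = 0 →
      phiDiv φ φ0 φstar0 lam fP fQ = φ0 + φstar0)
    ∧ (φ0 + φstar0 < ⊤ → phiDiv φ φ0 φstar0 lam fP fQ = φ0 + φstar0 →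
      lam ({x | 0 < fP x} ∩ {x | 0 < fQ x}) = 0) := by
  rw [phiDiv_eq_setLIntegral_add hfP hfQ, ← Set.ofPred_and]
  refine ⟨fun hS => ?_, fun hfin hD => ?_⟩
  · have hQ := withDensity_absolutelyContinuous lam fQ hS
    rw [hQ, withDensity_absolutelyContinuous lam fP hS, setLIntegral_measure_zero _ _ hQ]
    simp
  · by_contra hS
    have hQS := (withDensity_setOf_pos_and_pos_eq_zero_iff hfQ).not.2 hS
    have hφ0_fin : φ0 ≠ ⊤ := (le_self_add.trans_lt hfin).ne
    have hφstar0_fin : φstar0 ≠ ⊤ := (le_add_self.trans_lt hfin).ne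
    have hI_fin := ne_top_of_le_ne_top hfin.ne (hD ▸ le_self_add.trans le_self_add)
    have hI := setLIntegral_lt_of_lt_add_mul
      (fun _ hr₀ hr => ofReal_lt_add_mul_of_tendsto hconv hnonneg hstrict hφ0_fin hφstar0_fin
        hφ0 hφstar0 hr₀ hr) hfP hfQ hQS hI_fin
    exact (ENNReal.add_mul_tsub_add_mul_tsub_lt hφ0_fin hφstar0_fin prob_le_one prob_le_one hI).ne hD

/-- maximal value and singularity: let `φ : (0,∞) → [0,∞)` be
convex with `φ(1) = 0` and strictly convex at `1`, and let
`P = λ.withDensity f_P`, `Q = λ.withDensity f_Q` be probability measures with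
λ-densities `f_P`, `f_Q`. If `P ⊥ Q`, i.e. `λ({f_P > 0} ∩ {f_Q > 0}) = 0`, then
`D_φ(P,Q) = φ(0) + φ*(0)`; conversely, if `φ(0) + φ*(0) < ∞` and
`D_φ(P,Q) = φ(0) + φ*(0)`, then `P ⊥ Q`. -/
theorem phiDiv_eq_bound_iff_singular {𝒳 : Type*} [MeasurableSpace 𝒳]
    (lam : Measure 𝒳) [SigmaFinite lam]
    (fP fQ : 𝒳 → ℝ≥0∞) (hfP : Measurable fP) (hfQ : Measurable fQ)
    [IsProbabilityMeasure (lam.withDensity fP)]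
    [IsProbabilityMeasure (lam.withDensity fQ)]
    (φ : ℝ → ℝ) (hconv : ConvexOn ℝ (Set.Ioi (0:ℝ)) φ)
    (hnonneg : ∀ t ∈ Set.Ioi (0:ℝ), 0 ≤ φ t)
    (hone : φ 1 = 0) (hstrict : StrictlyConvexAtOne φ)
    (φ0 φstar0 : ℝ≥0∞)
    (hφ0 : Tendsto (fun t : ℝ => ENNReal.ofReal (φ t))
      (nhdsWithin 0 (Set.Ioi (0:ℝ))) (nhds φ0))
    (hφstar0 : Tendsto (fun t : ℝ => ENNReal.ofReal (φ t / t)) atTop (nhds φstar0)) :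
    (lam ({x | 0 < fP x} ∩ {x | 0 < fQ x}) = 0 →
      phiDiv φ φ0 φstar0 lam fP fQ = φ0 + φstar0)
    ∧ (φ0 + φstar0 < ⊤ → phiDiv φ φ0 φstar0 lam fP fQ = φ0 + φstar0 →
      lam ({x | 0 < fP x} ∩ {x | 0 < fQ x}) = 0) :=
  phiDiv_eq_bound_iff_singular_general lam fP fQ hfP hfQ φ hconv hnonneg hstrict φ0 φstar0 hφ0
    hφstar0
end

section
/- Let φ : (a,b) → ℝ be a finite strictly convex function on an open interval, c ∈ [0,1], let u, v : 𝒳 → (a,b) be measurable functions on a σ-finite measure space (𝒳, ℱ, λ), and let m₃ : 𝒳 → [0,∞) be measurable with m₃(x) > 0 for λ-almost every x. Then ∫_𝒳 ψ_{φ,c}(u(x), v(x)) · m₃(x) dλ(x) = 0 if and only if u(x) = v(x) for λ-almost every x ∈ 𝒳. -/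
open Set MeasureTheory
open scoped ENNReal

/-- `ψ_{φ,c}(s,t) := φ(s) − φ(t) − φ'_{+,c}(t)·(s − t)` where
`φ'_{+,c}(t) := c·φ'_+(t) + (1−c)·φ'_−(t)` is built from the one-sided
derivatives `dplus` (right) and `dminus` (left) of `φ`. -/
noncomputable def psiBS (φ dplus dminus : ℝ → ℝ) (c s t : ℝ) : ℝ :=
  φ s - φ t - (c * dplus t + (1 - c) * dminus t) * (s - t)

/-- left derivative at the left endpoint of a secant is at most the slope,
for a convex function on an open set -/
lemma leftDeriv_le_slope_aux {S : Set ℝ} {f : ℝ → ℝ} {x y f' : ℝ}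
    (hfc : ConvexOn ℝ S f) (hS : IsOpen S) (hx : x ∈ S) (hy : y ∈ S) (hxy : x < y)
    (hf' : HasDerivWithinAt f f' (Iio x) x) : f' ≤ slope f x y := by
  apply le_of_tendsto <| (hasDerivWithinAt_iff_tendsto_slope' notMem_Iio_self).mp hf'
  simp_rw [eventually_nhdsWithin_iff, slope_def_field]
  filter_upwards [hS.mem_nhds hx] with t htS (ht' : t < x)
  exact hfc.secant_mono hx htS hy ht'.ne hxy.ne' (ht'.le.trans hxy.le)

/-- slope is at most the right derivative at the right endpoint,
for a convex function on an open set -/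
lemma slope_le_rightDeriv_aux {S : Set ℝ} {f : ℝ → ℝ} {x y f' : ℝ}
    (hfc : ConvexOn ℝ S f) (hS : IsOpen S) (hx : x ∈ S) (hy : y ∈ S) (hxy : x < y)
    (hf' : HasDerivWithinAt f f' (Ioi y) y) : slope f x y ≤ f' := by
  rw [slope_comm]
  apply ge_of_tendsto <| (hasDerivWithinAt_iff_tendsto_slope' notMem_Ioi_self).mp hf'
  simp_rw [eventually_nhdsWithin_iff, slope_def_field]
  filter_upwards [hS.mem_nhds hy] with t htS (ht' : y < t)
  exact hfc.secant_mono hy hx htS hxy.ne ht'.ne' (hxy.le.trans ht'.le)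

/-- the key positivity lemma: `ψ_{φ,c}(s,t) > 0` whenever `s ≠ t`. -/
lemma psiBS_pos {S : Set ℝ} (hSopen : IsOpen S)
    {φ : ℝ → ℝ} (hconv : StrictConvexOn ℝ S φ)
    {dplus dminus : ℝ → ℝ}
    (hdp : ∀ t ∈ S, HasDerivWithinAt φ (dplus t) (Set.Ioi t) t)
    (hdm : ∀ t ∈ S, HasDerivWithinAt φ (dminus t) (Set.Iio t) t)
    {c : ℝ} (hc : c ∈ Set.Icc (0:ℝ) 1)
    {s t : ℝ} (hs : s ∈ S) (ht : t ∈ S) (hst : s ≠ t) :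
    0 < psiBS φ dplus dminus c s t := by
  obtain ⟨hc0, hc1⟩ := hc
  rcases lt_or_gt_of_ne hst with h | h
  · -- s < t : slope φ s t < dminus t and slope φ s t < dplus t
    have h1 : slope φ s t < dminus t :=
      hconv.slope_lt_of_hasDerivWithinAt_Iio hs ht h (hdm t ht)
    have h2 : slope φ s t < dplus t := by
      obtain ⟨m, hsm, hmt⟩ := exists_between h
      have hm : m ∈ S := hconv.1.ordConnected.out hs ht ⟨hsm.le, hmt.le⟩
      have hstrict := hconv.secant_strict_mono ht hs hm h.ne hmt.ne hsm
      simp_rw [← slope_def_field, slope_comm _ t] at hstrict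
      exact hstrict.trans_le
        (slope_le_rightDeriv_aux hconv.convexOn hSopen hm ht hmt (hdp t ht))
    set d := c * dplus t + (1 - c) * dminus t with hd
    have hdgt : slope φ s t < d := by
      have hmin : min (dplus t) (dminus t) ≤ d := by
        nlinarith [min_le_left (dplus t) (dminus t), min_le_right (dplus t) (dminus t)]
      exact (lt_min h2 h1).trans_le hmin
    have hslope : φ s - φ t = slope φ s t * (s - t) := by
      rw [slope_comm, slope_def_field]
      exact (div_mul_cancel₀ _ (sub_ne_zero.mpr hst)).symm
    rw [psiBS, hslope]
    nlinarith [sub_neg.mpr h]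
  · -- t < s : dplus t < slope φ t s and dminus t < slope φ t s
    have h1 : dplus t < slope φ t s :=
      hconv.lt_slope_of_hasDerivWithinAt_Ioi ht hs h (hdp t ht)
    have h2 : dminus t < slope φ t s := by
      obtain ⟨m, htm, hms⟩ := exists_between h
      have hm : m ∈ S := hconv.1.ordConnected.out ht hs ⟨htm.le, hms.le⟩
      have hstrict := hconv.secant_strict_mono ht hm hs htm.ne' h.ne' hms
      simp_rw [← slope_def_field] at hstrict
      exact (leftDeriv_le_slope_aux hconv.convexOn hSopen ht hm htm (hdm t ht)).trans_lt hstrict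
    set d := c * dplus t + (1 - c) * dminus t with hd
    have hdlt : d < slope φ t s := by
      have hmax : d ≤ max (dplus t) (dminus t) := by
        nlinarith [le_max_left (dplus t) (dminus t), le_max_right (dplus t) (dminus t)]
      exact hmax.trans_lt (max_lt h1 h2)
    have hslope : φ s - φ t = slope φ t s * (s - t) := by
      rw [slope_def_field]
      exact (div_mul_cancel₀ _ (sub_ne_zero.mpr hst)).symm
    rw [psiBS, hslope]
    nlinarith [sub_pos.mpr h]

/-- composition of a function monotone on `S` with a measurable map into `S`
is measurable, when `S` is ord-connected. -/
lemma monotoneOn_comp_measurable_aux {𝒳 : Type*} [MeasurableSpace 𝒳]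
    {S : Set ℝ} (hSint : S.OrdConnected) {g : ℝ → ℝ} (hg : MonotoneOn g S)
    {v : 𝒳 → ℝ} (hv : Measurable v) (hvS : ∀ x, v x ∈ S) :
    Measurable fun x => g (v x) := by
  apply measurable_of_Iic
  intro r
  have : (fun x => g (v x)) ⁻¹' Iic r = v ⁻¹' {t | t ∈ S ∧ g t ≤ r} := by
    ext x
    simp [hvS x]
  rw [this]
  refine hv ?_
  have : OrdConnected {t | t ∈ S ∧ g t ≤ r} := by
    constructor
    rintro t1 ⟨ht1S, ht1⟩ t2 ⟨ht2S, ht2⟩ z hz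
    have hzS : z ∈ S := hSint.out ht1S ht2S hz
    exact ⟨hzS, (hg hzS ht2S hz.2).trans ht2⟩
  exact this.measurableSet

/-- for a finite strictly convex function `φ` on an open interval
`S = (a,b)`, `c ∈ [0,1]`, measurable `u, v : 𝒳 → S` on a σ-finite measure space
`(𝒳, ℱ, λ)`, and measurable `m₃ : 𝒳 → [0,∞)` with `m₃ > 0` λ-a.e., one has
`∫ ψ_{φ,c}(u(x),v(x))·m₃(x) dλ(x) = 0` if and only if `u = v` λ-a.e. -/
theorem bsDivergence_eq_zero_iff {𝒳 : Type*} [MeasurableSpace 𝒳]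
    (lam : Measure 𝒳) [SigmaFinite lam]
    (S : Set ℝ) (hSopen : IsOpen S) (hSint : S.OrdConnected)
    (φ : ℝ → ℝ) (hconv : StrictConvexOn ℝ S φ)
    (dplus dminus : ℝ → ℝ)
    (hdp : ∀ t ∈ S, HasDerivWithinAt φ (dplus t) (Set.Ioi t) t)
    (hdm : ∀ t ∈ S, HasDerivWithinAt φ (dminus t) (Set.Iio t) t)
    (c : ℝ) (hc : c ∈ Set.Icc (0:ℝ) 1)
    (u v : 𝒳 → ℝ) (hu : Measurable u) (hv : Measurable v)
    (huS : ∀ x, u x ∈ S) (hvS : ∀ x, v x ∈ S)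
    (m₃ : 𝒳 → ℝ) (hm₃ : Measurable m₃) (hm₃0 : ∀ x, 0 ≤ m₃ x)
    (hm₃pos : ∀ᵐ x ∂lam, 0 < m₃ x) :
    ∫⁻ x, ENNReal.ofReal (psiBS φ dplus dminus c (u x) (v x) * m₃ x) ∂lam = 0
      ↔ u =ᵐ[lam] v := by
  -- one-sided derivatives are monotone on S
  have hdmdp : ∀ t ∈ S, dminus t ≤ dplus t := by
    intro t ht
    apply ge_of_tendsto <| (hasDerivWithinAt_iff_tendsto_slope' notMem_Ioi_self).mp (hdp t ht)
    rw [eventually_nhdsWithin_iff]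
    filter_upwards [hSopen.mem_nhds ht] with y hyS (hy : t < y)
    exact leftDeriv_le_slope_aux hconv.convexOn hSopen ht hyS hy (hdm t ht)
  have hdpmono : MonotoneOn dplus S := by
    intro t1 ht1 t2 ht2 h12
    rcases eq_or_lt_of_le h12 with rfl | h12
    · exact le_rfl
    calc dplus t1 ≤ slope φ t1 t2 :=
          hconv.convexOn.le_slope_of_hasDerivWithinAt_Ioi ht1 ht2 h12 (hdp t1 ht1)
      _ ≤ dminus t2 := hconv.convexOn.slope_le_of_hasDerivWithinAt_Iio ht1 ht2 h12 (hdm t2 ht2)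
      _ ≤ dplus t2 := hdmdp t2 ht2
  have hdmmono : MonotoneOn dminus S := by
    intro t1 ht1 t2 ht2 h12
    rcases eq_or_lt_of_le h12 with rfl | h12
    · exact le_rfl
    calc dminus t1 ≤ dplus t1 := hdmdp t1 ht1
      _ ≤ slope φ t1 t2 :=
          hconv.convexOn.le_slope_of_hasDerivWithinAt_Ioi ht1 ht2 h12 (hdp t1 ht1)
      _ ≤ dminus t2 := hconv.convexOn.slope_le_of_hasDerivWithinAt_Iio ht1 ht2 h12 (hdm t2 ht2)
  -- measurability of the integrand
  have hφcont : ContinuousOn φ S := hconv.convexOn.continuousOn hSopen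
  have hφcomp : ∀ (w : 𝒳 → ℝ), Measurable w → (∀ x, w x ∈ S) →
      Measurable fun x => φ (w x) := by
    intro w hw hwS
    have hrestr : Continuous (S.restrict φ) := continuousOn_iff_continuous_restrict.mp hφcont
    have : (fun x => φ (w x)) = (S.restrict φ) ∘ (fun x => (⟨w x, hwS x⟩ : S)) := rfl
    rw [this]
    exact hrestr.measurable.comp (Measurable.subtype_mk hw)
  have hmeas : Measurable fun x =>
      ENNReal.ofReal (psiBS φ dplus dminus c (u x) (v x) * m₃ x) := by
    apply Measurable.ennreal_ofReal
    apply Measurable.mul _ hm₃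
    unfold psiBS
    apply Measurable.sub
    apply Measurable.sub (hφcomp u hu huS) (hφcomp v hv hvS)
    apply Measurable.mul
    · exact Measurable.add
        ((monotoneOn_comp_measurable_aux hSint hdpmono hv hvS).const_mul c)
        ((monotoneOn_comp_measurable_aux hSint hdmmono hv hvS).const_mul (1 - c))
    · exact hu.sub hv
  rw [lintegral_eq_zero_iff hmeas]
  have hpsi_nonneg : ∀ x, 0 ≤ psiBS φ dplus dminus c (u x) (v x) := by
    intro x
    rcases eq_or_ne (u x) (v x) with h | h
    · simp [psiBS, h]
    · exact (psiBS_pos hSopen hconv hdp hdm hc (huS x) (hvS x) h).le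
  constructor
  · intro h
    filter_upwards [h, hm₃pos] with x hx hxm
    by_contra hne
    have hpos : 0 < psiBS φ dplus dminus c (u x) (v x) :=
      psiBS_pos hSopen hconv hdp hdm hc (huS x) (hvS x) hne
    have : ENNReal.ofReal (psiBS φ dplus dminus c (u x) (v x) * m₃ x) ≠ 0 := by
      simp only [ne_eq, ENNReal.ofReal_eq_zero, not_le]
      positivity
    exact this hx
  · intro h
    filter_upwards [h] with x hx
    simp [psiBS, hx]
end

section
/- (Data processing inequality.) Let φ : (0,∞) → [0,∞) be convex with φ(1) = 0 and strictly convex at 1, let P, Q be probability measures on (𝒳, ℱ) with λ-densities, and let T : 𝒳 → 𝒴 be a measurable map into a measurable space (𝒴, 𝒢). Then D_φ(P∘T⁻¹, Q∘T⁻¹) ≤ D_φ(P, Q), where the φ-divergence of the pushforward measures is computed with densities taken with respect to the finite dominating measure (P + Q)∘T⁻¹. -/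
/-!
The integrand of `D_φ` is the perspective `(u, v) ↦ v φ(u/v)` of `φ`, extended by `φ(0) v` and
`φ*(0) u` to the boundary. Since `φ ≥ 0` is convex with minimum at `1`, this perspective is the
supremum of the positive parts of the countably many linear forms `a_r u + b_r v` coming from the
tangents `a_r t + b_r` of `φ` at rational `r > 0`; so `D_φ(P, Q) = ∫ sup_r (a_r f_P + b_r f_Q)⁺ dλ`.
For one form, the integral of `(a p + b q)⁺` over `B` against the image is at most the integral
of `(a f_P + b f_Q)⁺` over `T⁻¹ B`: on the set where the form is positive, the left side equals
`a P(T⁻¹ B') + b Q(T⁻¹ B')`, i.e. the integral of the form over `T⁻¹ B'`. Splitting `B` according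
to which form realises a finite maximum extends this to finite maxima, and monotone convergence
to the supremum.
-/

open Set Filter MeasureTheory
open scoped ENNReal

open scoped Topology

lemma ConvexOn.add_rightDeriv_mul_sub_le {S : Set ℝ} {f : ℝ → ℝ} {x y : ℝ}
    (hf : ConvexOn ℝ S f) (hx : x ∈ interior S) (hy : y ∈ S) :
    f x + derivWithin f (Ioi x) x * (y - x) ≤ f y := by
  rcases lt_trichotomy x y with hxy | rfl | hyx
  · have h := hf.rightDeriv_le_slope_of_mem_interior hx hy hxy
    rw [slope_def_field, le_div_iff₀ (sub_pos.2 hxy)] at h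
    linarith
  · simp
  · have h := (hf.slope_le_leftDeriv_of_mem_interior hy hx hyx).trans
      (hf.leftDeriv_le_rightDeriv_of_mem_interior hx)
    rw [slope_def_field, div_le_iff₀ (sub_pos.2 hyx)] at h
    linarith

section Pushforward

variable {X Y : Type*} [MeasurableSpace X] [MeasurableSpace Y] {μ : Measure X} {ν : Measure Y}
  {T : X → Y} {f g : X → ℝ≥0∞} {f' g' : Y → ℝ≥0∞}

lemma ofReal_integral_le_lintegral_ofReal {h : X → ℝ} (hh : Integrable h μ) :
    ENNReal.ofReal (∫ x, h x ∂μ) ≤ ∫⁻ x, ENNReal.ofReal (h x) ∂μ := by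
  rw [integral_eq_lintegral_pos_part_sub_lintegral_neg_part hh]
  exact (ENNReal.ofReal_le_ofReal (sub_le_self _ ENNReal.toReal_nonneg)).trans
    ENNReal.ofReal_toReal_le

lemma lintegral_ne_top_of_isFiniteMeasure_withDensity [IsFiniteMeasure (μ.withDensity f)] :
    ∫⁻ x, f x ∂μ ≠ ∞ := by
  rw [← setLIntegral_univ, ← withDensity_apply _ MeasurableSet.univ]
  exact measure_ne_top _ _

lemma integrable_toReal_of_isFiniteMeasure_withDensity (hf : Measurable f)
    [IsFiniteMeasure (μ.withDensity f)] : Integrable (fun x => (f x).toReal) μ :=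
  integrable_toReal_of_lintegral_ne_top hf.aemeasurable
    lintegral_ne_top_of_isFiniteMeasure_withDensity

lemma setIntegral_toReal_eq_withDensity (hf : Measurable f) [IsFiniteMeasure (μ.withDensity f)]
    {s : Set X} (hs : MeasurableSet s) :
    ∫ x in s, (f x).toReal ∂μ = (μ.withDensity f s).toReal := by
  rw [integral_toReal hf.aemeasurable
      (ae_restrict_of_ae (ae_lt_top hf lintegral_ne_top_of_isFiniteMeasure_withDensity)),
    withDensity_apply _ hs]

lemma setIntegral_linear_toReal (hf : Measurable f) (hg : Measurable g)
    [IsFiniteMeasure (μ.withDensity f)] [IsFiniteMeasure (μ.withDensity g)] (a b : ℝ)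
    {s : Set X} (hs : MeasurableSet s) :
    ∫ x in s, (a * (f x).toReal + b * (g x).toReal) ∂μ
      = a * (μ.withDensity f s).toReal + b * (μ.withDensity g s).toReal := by
  rw [integral_add ((integrable_toReal_of_isFiniteMeasure_withDensity hf).restrict.const_mul a)
      ((integrable_toReal_of_isFiniteMeasure_withDensity hg).restrict.const_mul b),
    integral_const_mul, integral_const_mul, setIntegral_toReal_eq_withDensity hf hs,
    setIntegral_toReal_eq_withDensity hg hs]

lemma measurable_biSup_ofReal_linear (hf' : Measurable f') (hg' : Measurable g') {ι : Type*}
    (a b : ι → ℝ) (s : Finset ι) :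
    Measurable fun y => ⨆ i ∈ s, ENNReal.ofReal (a i * (f' y).toReal + b i * (g' y).toReal) :=
  Measurable.biSup (s : Set ι) s.countable_toSet fun i _ => by fun_prop

variable (hT : Measurable T) (hf : Measurable f) (hg : Measurable g) (hf' : Measurable f')
  (hg' : Measurable g') [IsFiniteMeasure (μ.withDensity f)] [IsFiniteMeasure (μ.withDensity g)]
  (hf'T : ν.withDensity f' = (μ.withDensity f).map T)
  (hg'T : ν.withDensity g' = (μ.withDensity g).map T)
include hT hf hg hf' hg' hf'T hg'T

lemma setLIntegral_ofReal_linear_le (a b : ℝ) {B : Set Y} (hB : MeasurableSet B) :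
    ∫⁻ y in B, ENNReal.ofReal (a * (f' y).toReal + b * (g' y).toReal) ∂ν
      ≤ ∫⁻ x in T ⁻¹' B, ENNReal.ofReal (a * (f x).toReal + b * (g x).toReal) ∂μ := by
  have : IsFiniteMeasure (ν.withDensity f') := hf'T ▸ inferInstance
  have : IsFiniteMeasure (ν.withDensity g') := hg'T ▸ inferInstance
  set ℓ' : Y → ℝ := fun y => a * (f' y).toReal + b * (g' y).toReal
  set ℓ : X → ℝ := fun x => a * (f x).toReal + b * (g x).toReal
  have hℓ' : Measurable ℓ' := by fun_prop
  -- only the part of `B` where the form is positive contributes on the left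
  set B' := {y | 0 < ℓ' y} ∩ B
  have hB' : MeasurableSet B' := (measurableSet_lt measurable_const hℓ').inter hB
  have hℓint : Integrable ℓ μ :=
    ((integrable_toReal_of_isFiniteMeasure_withDensity hf).const_mul a).add
      ((integrable_toReal_of_isFiniteMeasure_withDensity hg).const_mul b)
  have hℓ'int : Integrable ℓ' ν :=
    ((integrable_toReal_of_isFiniteMeasure_withDensity hf').const_mul a).add
      ((integrable_toReal_of_isFiniteMeasure_withDensity hg').const_mul b)
  calc ∫⁻ y in B, ENNReal.ofReal (ℓ' y) ∂ν = ∫⁻ y in B', ENNReal.ofReal (ℓ' y) ∂ν := by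
        rw [← Measure.restrict_restrict (measurableSet_lt measurable_const hℓ')]
        exact (setLIntegral_eq_of_support_subset fun y hy =>
          ENNReal.ofReal_pos.1 (pos_iff_ne_zero.2 hy)).symm
    _ = ENNReal.ofReal (∫ y in B', ℓ' y ∂ν) :=
        (ofReal_integral_eq_lintegral_ofReal hℓ'int.restrict
          ((ae_restrict_iff' hB').2 (ae_of_all _ fun y hy => hy.1.le))).symm
    _ = ENNReal.ofReal (∫ x in T ⁻¹' B', ℓ x ∂μ) := by
        rw [setIntegral_linear_toReal hf' hg' a b hB', setIntegral_linear_toReal hf hg a b (hT hB'),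
          hf'T, hg'T, Measure.map_apply hT hB', Measure.map_apply hT hB']
    _ ≤ ∫⁻ x in T ⁻¹' B', ENNReal.ofReal (ℓ x) ∂μ :=
        ofReal_integral_le_lintegral_ofReal hℓint.restrict
    _ ≤ ∫⁻ x in T ⁻¹' B, ENNReal.ofReal (ℓ x) ∂μ :=
        lintegral_mono_set (preimage_mono inter_subset_right)

lemma setLIntegral_biSup_ofReal_linear_le {ι : Type*} (a b : ι → ℝ) (s : Finset ι) {B : Set Y}
    (hB : MeasurableSet B) :
    ∫⁻ y in B, ⨆ i ∈ s, ENNReal.ofReal (a i * (f' y).toReal + b i * (g' y).toReal) ∂ν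
      ≤ ∫⁻ x in T ⁻¹' B, ⨆ i, ENNReal.ofReal (a i * (f x).toReal + b i * (g x).toReal) ∂μ := by
  classical
  induction s using Finset.induction_on generalizing B with
  | empty => simp
  | insert i s _ ih =>
    set ℓ : Y → ℝ≥0∞ := fun y => ENNReal.ofReal (a i * (f' y).toReal + b i * (g' y).toReal)
    set F : Y → ℝ≥0∞ :=
      fun y => ⨆ j ∈ s, ENNReal.ofReal (a j * (f' y).toReal + b j * (g' y).toReal)
    set E := {y | ℓ y ≤ F y}
    have hE : MeasurableSet E :=
      measurableSet_le (by fun_prop) (measurable_biSup_ofReal_linear hf' hg' a b s)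
    calc ∫⁻ y in B, ⨆ j ∈ insert i s,
          ENNReal.ofReal (a j * (f' y).toReal + b j * (g' y).toReal) ∂ν
        = ∫⁻ y in B ∩ E, F y ∂ν + ∫⁻ y in B \ E, ℓ y ∂ν := by
          simp_rw [Finset.iSup_insert]
          rw [← lintegral_inter_add_sdiff _ B hE]
          congr 1
          · exact setLIntegral_congr_fun (hB.inter hE) fun y hy => sup_eq_right.2 hy.2
          · exact setLIntegral_congr_fun (hB.diff hE) fun y hy => sup_eq_left.2 (le_of_not_ge hy.2)
      _ ≤ ∫⁻ x in T ⁻¹' (B ∩ E), ⨆ j, ENNReal.ofReal (a j * (f x).toReal + b j * (g x).toReal) ∂μ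
          + ∫⁻ x in T ⁻¹' (B \ E),
            ⨆ j, ENNReal.ofReal (a j * (f x).toReal + b j * (g x).toReal) ∂μ :=
          add_le_add (ih (hB.inter hE))
            ((setLIntegral_ofReal_linear_le hT hf hg hf' hg' hf'T hg'T _ _ (hB.diff hE)).trans
              (lintegral_mono fun x => le_iSup
                (fun j => ENNReal.ofReal (a j * (f x).toReal + b j * (g x).toReal)) i))
      _ = ∫⁻ x in T ⁻¹' B, ⨆ j, ENNReal.ofReal (a j * (f x).toReal + b j * (g x).toReal) ∂μ := by
          rw [preimage_inter, preimage_sdiff, lintegral_inter_add_sdiff _ _ (hT hE)]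

theorem lintegral_iSup_ofReal_linear_le {ι : Type*} [Countable ι] (a b : ι → ℝ) :
    ∫⁻ y, ⨆ i, ENNReal.ofReal (a i * (f' y).toReal + b i * (g' y).toReal) ∂ν
      ≤ ∫⁻ x, ⨆ i, ENNReal.ofReal (a i * (f x).toReal + b i * (g x).toReal) ∂μ := by
  conv_lhs => enter [2, y]; rw [iSup_eq_iSup_finset]
  rw [lintegral_iSup_directed
    (fun s => (measurable_biSup_ofReal_linear hf' hg' a b s).aemeasurable)
    (Monotone.directed_le fun s t hst y => biSup_mono fun i hi => Finset.mem_of_subset hst hi)]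
  refine iSup_le fun s => ?_
  simpa using
    setLIntegral_biSup_ofReal_linear_le hT hf hg hf' hg' hf'T hg'T a b s MeasurableSet.univ

end Pushforward

namespace PhiDiv

def posRats : Set ℝ := Ioi 0 ∩ range ((↑) : ℚ → ℝ)

instance : Countable posRats := ((countable_range _).mono inter_subset_right).to_subtype

lemma frequently_mem_posRats {l : Filter ℝ}
    (hl : ∀ s ∈ l, ∃ a b, 0 ≤ a ∧ a < b ∧ Ioo a b ⊆ s) : ∃ᶠ x in l, x ∈ posRats := by
  intro h
  obtain ⟨a, b, ha, hab, hs⟩ := hl _ h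
  obtain ⟨q, haq, hqb⟩ := exists_rat_btwn hab
  exact hs ⟨haq, hqb⟩ ⟨ha.trans_lt haq, q, rfl⟩

noncomputable def tangentIntercept (φ : ℝ → ℝ) (r : ℝ) : ℝ :=
  φ r - r * derivWithin φ (Ioi r) r

variable {φ : ℝ → ℝ}

lemma tangent_le (hφ : ConvexOn ℝ (Ioi 0) φ) {r t : ℝ} (hr : 0 < r) (ht : 0 < t) :
    derivWithin φ (Ioi r) r * t + tangentIntercept φ r ≤ φ t := by
  have := hφ.add_rightDeriv_mul_sub_le (x := r) (by rwa [interior_Ioi]) ht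
  rw [tangentIntercept]
  linarith

lemma iSup_tangent_eq (hφ : ConvexOn ℝ (Ioi 0) φ) {t : ℝ} (ht : 0 < t) :
    ⨆ r : posRats, ENNReal.ofReal (derivWithin φ (Ioi r) r * t + tangentIntercept φ r)
      = ENNReal.ofReal (φ t) := by
  refine le_antisymm (iSup_le fun r => ENNReal.ofReal_le_ofReal (tangent_le hφ r.2.1 ht)) ?_
  -- the tangent at `r < t` lies above the secant through `t / 2` and `r`, continued to `t`
  set g : ℝ → ℝ := fun r => φ r + (φ r - φ (t / 2)) / (r - t / 2) * (t - r)
  have hφt : ContinuousAt φ t := (hφ.continuousOn isOpen_Ioi).continuousAt (Ioi_mem_nhds ht)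
  have hg : Tendsto g (𝓝 t) (𝓝 (φ t)) := by
    have hcont : ContinuousAt g t :=
      hφt.add (((hφt.sub continuousAt_const).div (continuousAt_id.sub continuousAt_const)
        (show t - t / 2 ≠ 0 by linarith)).mul (continuousAt_const.sub continuousAt_id))
    simpa [g] using hcont.tendsto
  have hfreq : ∃ᶠ r in 𝓝[<] t, r ∈ posRats := frequently_mem_posRats fun s hs => by
    obtain ⟨l, hl, hls⟩ := mem_nhdsLT_iff_exists_Ioo_subset.1 hs
    exact ⟨max l 0, t, le_max_right _ _, max_lt hl ht,
      (Ioo_subset_Ioo_left (le_max_left _ _)).trans hls⟩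
  have hnear : ∀ᶠ r in 𝓝[<] t, t / 2 < r ∧ r < t :=
    (show ∀ᶠ r in 𝓝[<] t, t / 2 < r from nhdsWithin_le_nhds (lt_mem_nhds (half_lt_self ht))).and
      self_mem_nhdsWithin
  refine le_of_tendsto_of_frequently (ENNReal.tendsto_ofReal (hg.mono_left nhdsWithin_le_nhds))
    ((hfreq.and_eventually hnear).mono fun r ⟨hr, hr2, hrt⟩ =>
      le_iSup_of_le (⟨r, hr⟩ : posRats) (ENNReal.ofReal_le_ofReal ?_))
  have htan := tangent_le hφ hr.1 (half_pos ht)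
  have hslope : (φ r - φ (t / 2)) / (r - t / 2) ≤ derivWithin φ (Ioi r) r := by
    rw [div_le_iff₀ (by linarith)]
    rw [tangentIntercept] at htan
    linarith
  simp only [g, tangentIntercept]
  nlinarith

lemma iSup_tangentIntercept_eq (hφ : ConvexOn ℝ (Ioi 0) φ) (hnonneg : ∀ t ∈ Ioi 0, 0 ≤ φ t)
    (hone : φ 1 = 0) {φ0 : ℝ≥0∞}
    (hφ0 : Tendsto (fun t => ENNReal.ofReal (φ t)) (𝓝[>] 0) (𝓝 φ0)) :
    ⨆ r : posRats, ENNReal.ofReal (tangentIntercept φ r) = φ0 := by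
  apply le_antisymm
  · refine iSup_le fun r => le_of_tendsto_of_tendsto ?_ hφ0
      (eventually_nhdsWithin_of_forall fun t ht =>
        ENNReal.ofReal_le_ofReal (tangent_le hφ r.2.1 ht))
    have hlin : Continuous fun t => derivWithin φ (Ioi r) r * t + tangentIntercept φ r := by
      fun_prop
    exact ENNReal.tendsto_ofReal (by simpa using (hlin.tendsto 0).mono_left nhdsWithin_le_nhds)
  · -- `φ` is minimal at `1`, so tangents at `r < 1` have nonpositive slope and intercept `≥ φ r`
    have hfreq : ∃ᶠ r in 𝓝[>] 0, r ∈ posRats := frequently_mem_posRats fun s hs => by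
      obtain ⟨u, hu, hus⟩ := mem_nhdsGT_iff_exists_Ioo_subset.1 hs
      exact ⟨0, u, le_rfl, hu, hus⟩
    have hlt : ∀ᶠ r in 𝓝[>] (0 : ℝ), r < 1 := nhdsWithin_le_nhds (gt_mem_nhds one_pos)
    refine le_of_tendsto_of_frequently hφ0 ((hfreq.and_eventually hlt).mono fun r ⟨hr, hr1⟩ =>
      le_iSup_of_le (⟨r, hr⟩ : posRats) (ENNReal.ofReal_le_ofReal (?_ : φ r ≤ _)))
    have htan := tangent_le hφ hr.1 one_pos
    have hr0 := hnonneg r hr.1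
    rw [tangentIntercept, hone] at htan
    show φ r ≤ φ r - r * derivWithin φ (Ioi r) r
    have hslope : derivWithin φ (Ioi r) r ≤ 0 := by nlinarith
    linarith [mul_nonpos_of_nonneg_of_nonpos (le_of_lt hr.1) hslope]

lemma iSup_rightDeriv_eq (hφ : ConvexOn ℝ (Ioi 0) φ) (hnonneg : ∀ t ∈ Ioi 0, 0 ≤ φ t)
    (hone : φ 1 = 0) {φstar0 : ℝ≥0∞}
    (hφstar0 : Tendsto (fun t => ENNReal.ofReal (φ t / t)) atTop (𝓝 φstar0)) :
    ⨆ r : posRats, ENNReal.ofReal (derivWithin φ (Ioi r) r) = φstar0 := by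
  apply le_antisymm
  · refine iSup_le fun r => le_of_tendsto_of_tendsto (b := atTop)
      (f := fun t => ENNReal.ofReal (derivWithin φ (Ioi r) r + tangentIntercept φ r / t)) ?_
      hφstar0 ?_
    · have h : Tendsto (fun t : ℝ => tangentIntercept φ r / t) atTop (𝓝 0) :=
        tendsto_const_nhds.div_atTop tendsto_id
      exact ENNReal.tendsto_ofReal (by simpa using tendsto_const_nhds.add h)
    · filter_upwards [eventually_gt_atTop 0] with t ht
      refine ENNReal.ofReal_le_ofReal ?_
      rw [le_div_iff₀ ht, add_mul, div_mul_cancel₀ _ ht.ne']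
      exact tangent_le hφ r.2.1 ht
  · -- `φ` is minimal at `1`, so the tangent at `r > 1` has slope `≥ φ r / (r - 1) ≥ φ r / r`
    have hfreq : ∃ᶠ r in atTop, r ∈ posRats := frequently_mem_posRats fun s hs => by
      obtain ⟨a, ha⟩ := mem_atTop_sets.1 hs
      exact ⟨max a 0, max a 0 + 1, le_max_right _ _, lt_add_one _,
        fun x hx => ha x ((le_max_left _ _).trans hx.1.le)⟩
    refine le_of_tendsto_of_frequently hφstar0
      ((hfreq.and_eventually (eventually_gt_atTop 1)).mono fun r ⟨hr, hr1⟩ =>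
        le_iSup_of_le (⟨r, hr⟩ : posRats) (ENNReal.ofReal_le_ofReal (?_ : φ r / r ≤ _)))
    have htan := tangent_le hφ hr.1 one_pos
    have hr0 := hnonneg r hr.1
    rw [tangentIntercept, hone] at htan
    rw [div_le_iff₀ hr.1]
    nlinarith

open Classical in
noncomputable def perspective (φ : ℝ → ℝ) (φ0 φstar0 : ℝ≥0∞) (u v : ℝ≥0∞) : ℝ≥0∞ :=
  if u = 0 then φ0 * v else if v = 0 then φstar0 * u else v * ENNReal.ofReal (φ (u / v).toReal)

lemma phiDiv_eq_lintegral_perspective {X : Type*} [MeasurableSpace X] (φ : ℝ → ℝ)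
    (φ0 φstar0 : ℝ≥0∞) (μ : Measure X) {f g : X → ℝ≥0∞} (hf : Measurable f)
    (hg : Measurable g) (hg_fin : ∀ᵐ x ∂μ, g x < ∞) :
    phiDiv φ φ0 φstar0 μ f g = ∫⁻ x, perspective φ φ0 φstar0 (f x) (g x) ∂μ := by
  have hf0 : MeasurableSet {x | f x = 0} := hf (measurableSet_singleton 0)
  have hg0 : MeasurableSet {x | g x = 0} := hg (measurableSet_singleton 0)
  have hpos : MeasurableSet {x | 0 < f x ∧ 0 < g x} :=
    (hf measurableSet_Ioi).inter (hg measurableSet_Ioi)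
  have hsplit : ∀ x, perspective φ φ0 φstar0 (f x) (g x)
      = {x | 0 < f x ∧ 0 < g x}.indicator (fun x => g x * ENNReal.ofReal (φ (f x / g x).toReal)) x
        + φ0 * {x | f x = 0}.indicator g x + φstar0 * {x | g x = 0}.indicator f x := by
    intro x
    by_cases hfx : f x = 0 <;> by_cases hgx : g x = 0 <;>
      simp [perspective, indicator, hfx, hgx, pos_iff_ne_zero]
  simp_rw [hsplit]
  rw [lintegral_add_right _ ((hf.indicator hg0).const_mul _),
    lintegral_add_right _ ((hg.indicator hf0).const_mul _), lintegral_indicator hpos,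
    lintegral_const_mul _ (hg.indicator hf0), lintegral_const_mul _ (hf.indicator hg0),
    lintegral_indicator hf0, lintegral_indicator hg0, phiDiv, withDensity_apply _ hf0,
    withDensity_apply _ hg0, setLIntegral_withDensity_eq_setLIntegral_mul_non_measurable _ hg _
      hpos (ae_restrict_of_ae hg_fin)]
  rfl

lemma perspective_eq_iSup (hφ : ConvexOn ℝ (Ioi 0) φ) (hnonneg : ∀ t ∈ Ioi 0, 0 ≤ φ t)
    (hone : φ 1 = 0) {φ0 φstar0 : ℝ≥0∞}
    (hφ0 : Tendsto (fun t => ENNReal.ofReal (φ t)) (𝓝[>] 0) (𝓝 φ0))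
    (hφstar0 : Tendsto (fun t => ENNReal.ofReal (φ t / t)) atTop (𝓝 φstar0))
    {u v : ℝ≥0∞} (hu : u ≠ ∞) (hv : v ≠ ∞) :
    perspective φ φ0 φstar0 u v = ⨆ r : posRats,
      ENNReal.ofReal (derivWithin φ (Ioi r) r * u.toReal + tangentIntercept φ r * v.toReal) := by
  unfold perspective
  split_ifs with hu0 hv0
  · simp only [hu0, ENNReal.toReal_zero, mul_zero, zero_add]
    rw [← iSup_tangentIntercept_eq hφ hnonneg hone hφ0, ENNReal.iSup_mul]
    simp_rw [ENNReal.ofReal_mul' ENNReal.toReal_nonneg, ENNReal.ofReal_toReal hv]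
  · simp only [hv0, ENNReal.toReal_zero, mul_zero, add_zero]
    rw [← iSup_rightDeriv_eq hφ hnonneg hone hφstar0, ENNReal.iSup_mul]
    simp_rw [ENNReal.ofReal_mul' ENNReal.toReal_nonneg, ENNReal.ofReal_toReal hu]
  · have hv' : 0 < v.toReal := ENNReal.toReal_pos hv0 hv
    rw [ENNReal.toReal_div, ← iSup_tangent_eq hφ (div_pos (ENNReal.toReal_pos hu0 hu) hv'),
      ENNReal.mul_iSup]
    refine iSup_congr fun r => ?_
    have hlin : derivWithin φ (Ioi r) r * u.toReal + tangentIntercept φ r * v.toReal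
        = v.toReal * (derivWithin φ (Ioi r) r * (u.toReal / v.toReal) + tangentIntercept φ r) := by
      field_simp
    rw [hlin, ENNReal.ofReal_mul hv'.le, ENNReal.ofReal_toReal hv]

theorem phiDiv_eq_lintegral_iSup_tangent (hφ : ConvexOn ℝ (Ioi 0) φ)
    (hnonneg : ∀ t ∈ Ioi 0, 0 ≤ φ t) (hone : φ 1 = 0) {φ0 φstar0 : ℝ≥0∞}
    (hφ0 : Tendsto (fun t => ENNReal.ofReal (φ t)) (𝓝[>] 0) (𝓝 φ0))
    (hφstar0 : Tendsto (fun t => ENNReal.ofReal (φ t / t)) atTop (𝓝 φstar0))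
    {X : Type*} [MeasurableSpace X] (μ : Measure X) {f g : X → ℝ≥0∞} (hf : Measurable f)
    (hg : Measurable g) (hf_fin : ∀ᵐ x ∂μ, f x < ∞) (hg_fin : ∀ᵐ x ∂μ, g x < ∞) :
    phiDiv φ φ0 φstar0 μ f g = ∫⁻ x, ⨆ r : posRats, ENNReal.ofReal
      (derivWithin φ (Ioi r) r * (f x).toReal + tangentIntercept φ r * (g x).toReal) ∂μ := by
  rw [phiDiv_eq_lintegral_perspective φ φ0 φstar0 μ hf hg hg_fin]
  refine lintegral_congr_ae ?_
  filter_upwards [hf_fin, hg_fin] with x hfx hgx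
  exact perspective_eq_iSup hφ hnonneg hone hφ0 hφstar0 hfx.ne hgx.ne

end PhiDiv

theorem phiDiv_data_processing_general {𝒳 𝒴 : Type*} [MeasurableSpace 𝒳] [MeasurableSpace 𝒴]
    (lam : Measure 𝒳)
    (fP fQ : 𝒳 → ℝ≥0∞) (hfP : Measurable fP) (hfQ : Measurable fQ)
    [IsProbabilityMeasure (lam.withDensity fP)]
    [IsProbabilityMeasure (lam.withDensity fQ)]
    (φ : ℝ → ℝ) (hconv : ConvexOn ℝ (Set.Ioi (0:ℝ)) φ)
    (hnonneg : ∀ t ∈ Set.Ioi (0:ℝ), 0 ≤ φ t)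
    (hone : φ 1 = 0)
    (φ0 φstar0 : ℝ≥0∞)
    (hφ0 : Tendsto (fun t : ℝ => ENNReal.ofReal (φ t))
      (nhdsWithin 0 (Set.Ioi (0:ℝ))) (nhds φ0))
    (hφstar0 : Tendsto (fun t : ℝ => ENNReal.ofReal (φ t / t)) atTop (nhds φstar0))
    (T : 𝒳 → 𝒴) (hT : Measurable T) :
    phiDiv φ φ0 φstar0
      ((lam.withDensity fP + lam.withDensity fQ).map T)
      (((lam.withDensity fP).map T).rnDeriv
        ((lam.withDensity fP + lam.withDensity fQ).map T))
      (((lam.withDensity fQ).map T).rnDeriv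
        ((lam.withDensity fP + lam.withDensity fQ).map T))
    ≤ phiDiv φ φ0 φstar0 lam fP fQ := by
  set P := lam.withDensity fP
  set Q := lam.withDensity fQ
  set ν := (P + Q).map T
  have hν : ν = P.map T + Q.map T := Measure.map_add _ _ hT
  have hP : ν.withDensity ((P.map T).rnDeriv ν) = P.map T :=
    Measure.withDensity_rnDeriv_eq _ _
      (hν ▸ Measure.absolutelyContinuous_of_le (Measure.le_add_right le_rfl))
  have hQ : ν.withDensity ((Q.map T).rnDeriv ν) = Q.map T :=
    Measure.withDensity_rnDeriv_eq _ _
      (hν ▸ Measure.absolutelyContinuous_of_le (Measure.le_add_left le_rfl))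
  rw [PhiDiv.phiDiv_eq_lintegral_iSup_tangent hconv hnonneg hone hφ0 hφstar0 ν
      (Measure.measurable_rnDeriv _ _) (Measure.measurable_rnDeriv _ _)
      (Measure.rnDeriv_lt_top _ _) (Measure.rnDeriv_lt_top _ _),
    PhiDiv.phiDiv_eq_lintegral_iSup_tangent hconv hnonneg hone hφ0 hφstar0 lam hfP hfQ
      (ae_lt_top hfP lintegral_ne_top_of_isFiniteMeasure_withDensity)
      (ae_lt_top hfQ lintegral_ne_top_of_isFiniteMeasure_withDensity)]
  exact lintegral_iSup_ofReal_linear_le hT hfP hfQ (Measure.measurable_rnDeriv _ _)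
    (Measure.measurable_rnDeriv _ _) hP hQ _ _

/-- data processing inequality: let `φ : (0,∞) → [0,∞)` be
convex with `φ(1) = 0` and strictly convex at `1`, let
`P = λ.withDensity f_P`, `Q = λ.withDensity f_Q` be probability measures with
λ-densities, and let `T : 𝒳 → 𝒴` be measurable. Then
`D_φ(P∘T⁻¹, Q∘T⁻¹) ≤ D_φ(P,Q)`, where the φ-divergence of the pushforward
measures is computed with densities (Radon–Nikodym derivatives) taken with
respect to the finite dominating measure `(P + Q)∘T⁻¹`. -/
theorem phiDiv_data_processing {𝒳 𝒴 : Type*} [MeasurableSpace 𝒳] [MeasurableSpace 𝒴]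
    (lam : Measure 𝒳) [SigmaFinite lam]
    (fP fQ : 𝒳 → ℝ≥0∞) (hfP : Measurable fP) (hfQ : Measurable fQ)
    [IsProbabilityMeasure (lam.withDensity fP)]
    [IsProbabilityMeasure (lam.withDensity fQ)]
    (φ : ℝ → ℝ) (hconv : ConvexOn ℝ (Set.Ioi (0:ℝ)) φ)
    (hnonneg : ∀ t ∈ Set.Ioi (0:ℝ), 0 ≤ φ t)
    (hone : φ 1 = 0) (hstrict : StrictlyConvexAtOne φ)
    (φ0 φstar0 : ℝ≥0∞)
    (hφ0 : Tendsto (fun t : ℝ => ENNReal.ofReal (φ t))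
      (nhdsWithin 0 (Set.Ioi (0:ℝ))) (nhds φ0))
    (hφstar0 : Tendsto (fun t : ℝ => ENNReal.ofReal (φ t / t)) atTop (nhds φstar0))
    (T : 𝒳 → 𝒴) (hT : Measurable T) :
    phiDiv φ φ0 φstar0
      ((lam.withDensity fP + lam.withDensity fQ).map T)
      (((lam.withDensity fP).map T).rnDeriv
        ((lam.withDensity fP + lam.withDensity fQ).map T))
      (((lam.withDensity fQ).map T).rnDeriv
        ((lam.withDensity fP + lam.withDensity fQ).map T))
    ≤ phiDiv φ φ0 φstar0 lam fP fQ :=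
  phiDiv_data_processing_general lam fP fQ hfP hfQ φ hconv hnonneg hone φ0 φstar0 hφ0 hφstar0 T hT
end

section
/- Let P and Q be Borel probability measures on ℝ and let the cost function ψ̃ : ℝ × ℝ → [0,∞) be continuous and quasi-antitone. Then for every probability measure π on ℝ × ℝ whose first marginal is P and whose second marginal is Q, ∫_{ℝ×ℝ} ψ̃ dπ ≥ ∫_{(0,1)} ψ̃(F_P^←(x), F_Q^←(x)) dλ_L(x), where λ_L is Lebesgue measure on (0,1). -/
/-!
Let `ρ` be the law of `(F_P^←, F_Q^←)` under Lebesgue measure on `(0,1)`. It couples `P` and `Q`,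
and on upper quadrants it dominates every coupling:
`ρ([s,∞) × [t,∞)) = min (P[s,∞)) (Q[t,∞)) ≥ π([s,∞) × [t,∞))`.
On a finite grid, a quasi-antitone cost is a sum of a function of `u`, a function of `v`, and a
nonpositive combination of indicators of upper quadrants; so after rounding both coordinates down to
the grid, `∫ ψ dρ ≤ ∫ ψ dπ`. The grid is uniform in `arctan`-coordinates, so the rounding error is
uniformly small for costs that are Lipschitz for `|arctan u - arctan u'|`. A continuous nonnegative
cost is the increasing limit of its Lipschitz envelopes, which remain quasi-antitone, and monotone
convergence concludes.
-/

open Set MeasureTheory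
open scoped ENNReal

/-- The quantile function `F_P^←(x) := inf{z ∈ ℝ : F_P(z) ≥ x}` of a Borel
probability measure `P` on `ℝ`, where `F_P(z) := P((−∞,z])`. -/
noncomputable def quantileFn (P : Measure ℝ) (x : ℝ) : ℝ :=
  sInf {z : ℝ | x ≤ (P (Set.Iic z)).toReal}

open Filter Topology ProbabilityTheory

lemma volume_Ioo_inter_Iic {c : ℝ} (hc : c ≤ 1) :
    volume (Ioo (0 : ℝ) 1 ∩ Iic c) = ENNReal.ofReal c := by
  rw [measure_congr (Ioo_ae_eq_Ioc.inter (ae_eq_refl (Iic c))), Ioc_inter_Iic, Real.volume_Ioc,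
    inf_eq_right.2 hc, sub_zero]

lemma ofReal_one_sub_measureReal_Iio (P : Measure ℝ) [IsProbabilityMeasure P] (s : ℝ) :
    ENNReal.ofReal (1 - P.real (Iio s)) = P (Ici s) := by
  rw [← probReal_compl_eq_one_sub measurableSet_Iio, compl_Iio, ofReal_measureReal]

lemma measure_prod_le_min_map_apply {α β : Type*} [MeasurableSpace α] [MeasurableSpace β]
    {μ : Measure (α × β)} {A : Set α} {B : Set β} (hA : MeasurableSet A) (hB : MeasurableSet B) :
    μ (A ×ˢ B) ≤ min (μ.map Prod.fst A) (μ.map Prod.snd B) := by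
  rw [Measure.map_apply measurable_fst hA, Measure.map_apply measurable_snd hB]
  exact le_min (measure_mono fun p hp => hp.1) (measure_mono fun p hp => hp.2)

section Quantile

variable {P : Measure ℝ} {x z : ℝ}

lemma bddBelow_setOf_le_cdf (hx : 0 < x) : BddBelow {z : ℝ | x ≤ cdf P z} := by
  obtain ⟨b, hb⟩ :=
    ((tendsto_cdf_atBot (μ := P)).eventually (eventually_lt_nhds hx)).exists_forall_of_atBot
  exact ⟨b, fun z hz => le_of_not_gt fun hzb => (hb z hzb.le).not_ge hz⟩

lemma nonempty_setOf_le_cdf (hx : x < 1) : {z : ℝ | x ≤ cdf P z}.Nonempty :=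
  ((tendsto_cdf_atTop (μ := P)).eventually (eventually_ge_nhds hx)).exists

variable [IsProbabilityMeasure P]

lemma quantileFn_eq_sInf_cdf : quantileFn P x = sInf {z : ℝ | x ≤ cdf P z} := by
  simp only [quantileFn, cdf_eq_real, measureReal_def]

lemma le_cdf_quantileFn (hx : x ∈ Ioo 0 1) : x ≤ cdf P (quantileFn P x) := by
  rw [quantileFn_eq_sInf_cdf]
  refine ge_of_tendsto ((cdf P).right_continuous _ |>.mono Ioi_subset_Ici_self) ?_
  filter_upwards [self_mem_nhdsWithin] with z hz
  obtain ⟨y, hy, hyz⟩ := exists_lt_of_csInf_lt (nonempty_setOf_le_cdf hx.2) hz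
  exact hy.trans (monotone_cdf P hyz.le)

lemma quantileFn_le_iff (hx : x ∈ Ioo 0 1) : quantileFn P x ≤ z ↔ x ≤ cdf P z := by
  refine ⟨fun h => (le_cdf_quantileFn hx).trans (monotone_cdf P h), fun h => ?_⟩
  rw [quantileFn_eq_sInf_cdf]
  exact csInf_le (bddBelow_setOf_le_cdf hx.1) h

lemma le_quantileFn_of_measureReal_Iio_lt (hx : x ∈ Ioo 0 1) (h : P.real (Iio z) < x) :
    z ≤ quantileFn P x := by
  by_contra! hlt
  refine h.not_ge ((le_cdf_quantileFn (P := P) hx).trans ?_)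
  rw [cdf_eq_real (μ := P)]
  exact measureReal_mono fun _ hy => lt_of_le_of_lt hy hlt

lemma monotoneOn_quantileFn : MonotoneOn (quantileFn P) (Ioo 0 1) := fun _ hx _ hy hxy =>
  (quantileFn_le_iff hx).2 (hxy.trans (le_cdf_quantileFn hy))

lemma aemeasurable_quantileFn : AEMeasurable (quantileFn P) (volume.restrict (Ioo 0 1)) :=
  aemeasurable_restrict_of_monotoneOn measurableSet_Ioo monotoneOn_quantileFn

lemma map_quantileFn : (volume.restrict (Ioo 0 1)).map (quantileFn P) = P := by
  refine Measure.ext_of_Iic _ _ fun z => ?_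
  rw [Measure.map_apply_of_aemeasurable aemeasurable_quantileFn measurableSet_Iic,
    Measure.restrict_apply' measurableSet_Ioo, inter_comm,
    show Ioo 0 1 ∩ quantileFn P ⁻¹' Iic z = Ioo 0 1 ∩ Iic (cdf P z) from
      ext fun x => and_congr_right fun hx => quantileFn_le_iff hx,
    volume_Ioo_inter_Iic (cdf_le_one P z), ofReal_cdf]

end Quantile

instance : IsProbabilityMeasure (volume.restrict (Ioo (0 : ℝ) 1)) :=
  ⟨by simp⟩

noncomputable def comonotoneCoupling (P Q : Measure ℝ) : Measure (ℝ × ℝ) :=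
  (volume.restrict (Ioo 0 1)).map fun x => (quantileFn P x, quantileFn Q x)

namespace comonotoneCoupling

variable (P Q : Measure ℝ) [IsProbabilityMeasure P] [IsProbabilityMeasure Q]

lemma aemeasurable_quantileFn_prod :
    AEMeasurable (fun x => (quantileFn P x, quantileFn Q x)) (volume.restrict (Ioo 0 1)) :=
  aemeasurable_quantileFn.prodMk aemeasurable_quantileFn

instance : IsProbabilityMeasure (comonotoneCoupling P Q) :=
  Measure.isProbabilityMeasure_map (aemeasurable_quantileFn_prod P Q)

lemma map_fst : (comonotoneCoupling P Q).map Prod.fst = P := by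
  rw [comonotoneCoupling, AEMeasurable.map_map_of_aemeasurable measurable_fst.aemeasurable
    (aemeasurable_quantileFn_prod P Q)]
  exact map_quantileFn

lemma map_snd : (comonotoneCoupling P Q).map Prod.snd = Q := by
  rw [comonotoneCoupling, AEMeasurable.map_map_of_aemeasurable measurable_snd.aemeasurable
    (aemeasurable_quantileFn_prod P Q)]
  exact map_quantileFn

lemma lintegral_eq {f : ℝ × ℝ → ℝ≥0∞} (hf : Measurable f) :
    ∫⁻ p, f p ∂comonotoneCoupling P Q = ∫⁻ x in Ioo 0 1, f (quantileFn P x, quantileFn Q x) :=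
  lintegral_map' hf.aemeasurable (aemeasurable_quantileFn_prod P Q)

lemma min_le_apply_Ici_prod_Ici (s t : ℝ) :
    min (P (Ici s)) (Q (Ici t)) ≤ comonotoneCoupling P Q (Ici s ×ˢ Ici t) := by
  set a := P.real (Iio s)
  set b := Q.real (Iio t)
  have hsub : Ioo (max a b) 1 ⊆
      Ioo 0 1 ∩ (fun x => (quantileFn P x, quantileFn Q x)) ⁻¹' (Ici s ×ˢ Ici t) := by
    intro x hx
    have hx01 : x ∈ Ioo 0 1 :=
      ⟨(le_max_left a b).trans_lt hx.1 |>.trans_le' measureReal_nonneg, hx.2⟩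
    exact ⟨hx01, le_quantileFn_of_measureReal_Iio_lt hx01 ((le_max_left a b).trans_lt hx.1),
      le_quantileFn_of_measureReal_Iio_lt hx01 ((le_max_right a b).trans_lt hx.1)⟩
  calc min (P (Ici s)) (Q (Ici t))
      = ENNReal.ofReal (1 - max a b) := by
        rw [← ofReal_one_sub_measureReal_Iio, ← ofReal_one_sub_measureReal_Iio,
          ← ENNReal.ofReal_min, min_sub_sub_left]
    _ = volume (Ioo (max a b) 1) := Real.volume_Ioo.symm
    _ ≤ _ := by
      rw [comonotoneCoupling, Measure.map_apply_of_aemeasurable (aemeasurable_quantileFn_prod P Q)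
        (measurableSet_Ici.prod measurableSet_Ici), Measure.restrict_apply' measurableSet_Ioo,
        inter_comm]
      exact measure_mono hsub

lemma measure_Ici_prod_Ici_le {μ : Measure (ℝ × ℝ)} (hfst : μ.map Prod.fst = P)
    (hsnd : μ.map Prod.snd = Q) (s t : ℝ) :
    μ (Ici s ×ˢ Ici t) ≤ comonotoneCoupling P Q (Ici s ×ˢ Ici t) := by
  have := measure_prod_le_min_map_apply (μ := μ) (measurableSet_Ici (a := s))
    (measurableSet_Ici (a := t))
  rw [hfst, hsnd] at this
  exact this.trans (min_le_apply_Ici_prod_Ici P Q s t)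

end comonotoneCoupling

section CostComparison

open Real

def QuasiAntitone (ψ : ℝ → ℝ → ℝ) : Prop :=
  ∀ u₁ u₂ v₁ v₂ : ℝ, u₁ ≤ u₂ → v₁ ≤ v₂ → ψ u₁ v₁ + ψ u₂ v₂ ≤ ψ u₂ v₁ + ψ u₁ v₂

def ArctanLipschitzWith (c : ℝ) (ψ : ℝ → ℝ → ℝ) : Prop :=
  ∀ u v u' v' : ℝ, ψ u v ≤ ψ u' v' + c * (dist (arctan u) (arctan u') + dist (arctan v) (arctan v'))

variable {ψ : ℝ → ℝ → ℝ} {c : ℝ}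

lemma QuasiAntitone.min_add_max_le (hψ : QuasiAntitone ψ) (a a' b b' : ℝ) :
    ψ (min a a') (min b b') + ψ (max a a') (max b b') ≤ ψ a b + ψ a' b' := by
  rcases le_total a a' with ha | ha <;> rcases le_total b b' with hb | hb <;>
    simp only [min_eq_left, min_eq_right, max_eq_left, max_eq_right, ha, hb]
  · exact le_rfl
  · linarith [hψ a a' b' b ha hb]
  · linarith [hψ a' a b b' ha hb]
  · linarith

lemma quasiAntitone_dist_arctan : QuasiAntitone fun x y => dist (arctan x) (arctan y) := by
  intro u₁ u₂ v₁ v₂ hu hv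
  have hu' := arctan_strictMono.monotone hu
  have hv' := arctan_strictMono.monotone hv
  simp only [dist_eq]
  rcases abs_cases (arctan u₁ - arctan v₁) with h₁ | h₁ <;>
  rcases abs_cases (arctan u₂ - arctan v₂) with h₂ | h₂ <;>
  rcases abs_cases (arctan u₂ - arctan v₁) with h₃ | h₃ <;>
  rcases abs_cases (arctan u₁ - arctan v₂) with h₄ | h₄ <;>
  linarith

lemma dist_arctan_lt_pi (u v : ℝ) : dist (arctan u) (arctan v) < π := by
  rw [dist_eq, abs_lt]
  constructor <;> linarith [neg_pi_div_two_lt_arctan u, arctan_lt_pi_div_two u,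
    neg_pi_div_two_lt_arctan v, arctan_lt_pi_div_two v]

lemma ArctanLipschitzWith.abs_le (hψ : ArctanLipschitzWith c ψ) (hc : 0 ≤ c) (u v : ℝ) :
    |ψ u v| ≤ |ψ 0 0| + 2 * c * π := by
  have h₁ := hψ u v 0 0
  have h₂ := hψ 0 0 u v
  have hπ : c * (dist (arctan u) (arctan 0) + dist (arctan v) (arctan 0)) ≤ c * (2 * π) := by
    gcongr; linarith [dist_arctan_lt_pi u 0, dist_arctan_lt_pi v 0]
  rw [dist_comm (arctan 0), dist_comm (arctan 0)] at h₂
  rw [_root_.abs_le]; constructor <;> linarith [neg_abs_le (ψ 0 0), le_abs_self (ψ 0 0)]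

lemma ArctanLipschitzWith.continuous (hψ : ArctanLipschitzWith c ψ) :
    Continuous (Function.uncurry ψ) := by
  refine continuous_iff_continuousAt.2 fun q => tendsto_iff_dist_tendsto_zero.2 ?_
  have hd : Continuous fun p : ℝ × ℝ =>
      c * (dist (arctan p.1) (arctan q.1) + dist (arctan p.2) (arctan q.2)) := by fun_prop
  refine squeeze_zero (fun _ => dist_nonneg) (fun p => ?_) (by simpa using hd.tendsto q)
  have h₁ := hψ p.1 p.2 q.1 q.2
  have h₂ := hψ q.1 q.2 p.1 p.2
  rw [dist_comm (arctan q.1), dist_comm (arctan q.2)] at h₂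
  rw [dist_eq]
  change |ψ p.1 p.2 - ψ q.1 q.2| ≤ _
  rw [abs_sub_le_iff]
  constructor <;> linarith

noncomputable def gridStep (n : ℕ) : ℝ := π / (n + 2)

noncomputable def gridAngle (n i : ℕ) : ℝ := -(π / 2) + (i + 1) * gridStep n

noncomputable def gridPt (n i : ℕ) : ℝ := tan (gridAngle n i)

/-- Points below the whole grid get index `0`, so `gridRound` rounds them up to `gridPt n 0`. -/
noncomputable def gridIdx (n : ℕ) (u : ℝ) : ℕ := Nat.findGreatest (fun i => gridPt n i ≤ u) n

noncomputable def gridRound (n : ℕ) (u : ℝ) : ℝ := gridPt n (gridIdx n u)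

section Grid

variable {n i j : ℕ} {u : ℝ}

lemma gridStep_pos (n : ℕ) : 0 < gridStep n := by
  unfold gridStep; positivity

lemma tendsto_gridStep : Tendsto gridStep atTop (𝓝 0) := by
  have := (tendsto_const_div_atTop_nhds_zero_nat π).comp (tendsto_add_atTop_nat 2)
  refine this.congr fun n => ?_
  simp [gridStep]

lemma gridAngle_add_gridStep (n i : ℕ) : gridAngle n i + gridStep n = gridAngle n (i + 1) := by
  simp only [gridAngle]; push_cast; ring

lemma gridAngle_zero_sub_gridStep (n : ℕ) : gridAngle n 0 - gridStep n = -(π / 2) := by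
  simp [gridAngle]

lemma gridAngle_self_add_gridStep (n : ℕ) : gridAngle n n + gridStep n = π / 2 := by
  have : (n + 2 : ℝ) * gridStep n = π := by
    unfold gridStep; field_simp
  simp only [gridAngle]; linarith

lemma gridAngle_mono (h : i ≤ j) : gridAngle n i ≤ gridAngle n j := by
  unfold gridAngle
  have := gridStep_pos n
  gcongr

lemma gridAngle_mem_Ioo (hi : i ≤ n) : gridAngle n i ∈ Ioo (-(π / 2)) (π / 2) := by
  have := gridStep_pos n
  constructor
  · linarith [gridAngle_zero_sub_gridStep n, gridAngle_mono (n := n) (Nat.zero_le i)]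
  · linarith [gridAngle_self_add_gridStep n, gridAngle_mono (n := n) hi]

lemma arctan_gridPt (hi : i ≤ n) : arctan (gridPt n i) = gridAngle n i :=
  arctan_tan (gridAngle_mem_Ioo hi).1 (gridAngle_mem_Ioo hi).2

lemma gridPt_le_gridPt (hij : i ≤ j) (hj : j ≤ n) : gridPt n i ≤ gridPt n j := by
  rw [← arctan_strictMono.le_iff_le, arctan_gridPt (hij.trans hj), arctan_gridPt hj]
  exact gridAngle_mono hij

lemma gridIdx_le : gridIdx n u ≤ n := Nat.findGreatest_le n

lemma gridPt_gridIdx_le (h : gridIdx n u ≠ 0) : gridPt n (gridIdx n u) ≤ u :=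
  Nat.findGreatest_of_ne_zero rfl h

lemma lt_gridIdx_iff (hi : i < n) : i < gridIdx n u ↔ gridPt n (i + 1) ≤ u := by
  refine ⟨fun h => ?_, fun h => Nat.le_findGreatest hi h⟩
  exact (gridPt_le_gridPt h gridIdx_le).trans (gridPt_gridIdx_le (by omega))

lemma monotone_gridRound (n : ℕ) : Monotone (gridRound n) := fun _ _ huv =>
  gridPt_le_gridPt (Nat.findGreatest_mono_left (fun _ h => h.trans huv) n) gridIdx_le

lemma dist_arctan_gridRound_le (n : ℕ) (u : ℝ) :
    dist (arctan u) (arctan (gridRound n u)) ≤ gridStep n := by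
  rw [gridRound, arctan_gridPt gridIdx_le, dist_eq, abs_le]
  constructor
  · rcases Nat.eq_zero_or_pos (gridIdx n u) with h0 | hpos
    · rw [h0]
      linarith [gridAngle_zero_sub_gridStep n, neg_pi_div_two_lt_arctan u]
    · have := gridPt_gridIdx_le hpos.ne'
      rw [← arctan_strictMono.le_iff_le, arctan_gridPt gridIdx_le] at this
      linarith [gridStep_pos n]
  · rcases gridIdx_le.lt_or_eq with hlt | heq
    · have := (lt_gridIdx_iff (u := u) hlt).not.1 (lt_irrefl _)
      rw [not_le, ← arctan_strictMono.lt_iff_lt, arctan_gridPt hlt,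
        ← gridAngle_add_gridStep] at this
      linarith
    · rw [heq]
      linarith [gridAngle_self_add_gridStep n, arctan_lt_pi_div_two u]

end Grid

lemma sum_range_sum_range_mixed_diff (f : ℕ → ℕ → ℝ) (a b : ℕ) :
    ∑ i ∈ Finset.range a, ∑ j ∈ Finset.range b,
        (f (i + 1) (j + 1) - f (i + 1) j - f i (j + 1) + f i j) =
      f a b - f a 0 - f 0 b + f 0 0 := by
  have hinner (i : ℕ) : ∑ j ∈ Finset.range b,
      (f (i + 1) (j + 1) - f (i + 1) j - f i (j + 1) + f i j) =
        (f (i + 1) b - f i b) - (f (i + 1) 0 - f i 0) := by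
    rw [← Finset.sum_range_sub (fun j => f (i + 1) j - f i j)]
    exact Finset.sum_congr rfl fun j _ => by ring
  rw [Finset.sum_congr rfl fun i _ => hinner i, Finset.sum_sub_distrib,
    Finset.sum_range_sub (f · b), Finset.sum_range_sub (f · 0)]
  ring

lemma sum_range_ite_lt {M : Type*} [AddCommMonoid M] (F : ℕ → M) {a n : ℕ} (h : a ≤ n) :
    ∑ i ∈ Finset.range n, (if i < a then F i else 0) = ∑ i ∈ Finset.range a, F i := by
  rw [← Finset.sum_filter]
  congr 1
  ext i
  simp only [Finset.mem_filter, Finset.mem_range]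
  omega

noncomputable def gridMixedDiff (ψ : ℝ → ℝ → ℝ) (n i j : ℕ) : ℝ :=
  ψ (gridPt n (i + 1)) (gridPt n (j + 1)) - ψ (gridPt n (i + 1)) (gridPt n j)
    - ψ (gridPt n i) (gridPt n (j + 1)) + ψ (gridPt n i) (gridPt n j)

noncomputable def gridQuadrantSum (ψ : ℝ → ℝ → ℝ) (n : ℕ) (p : ℝ × ℝ) : ℝ :=
  ∑ i ∈ Finset.range n, ∑ j ∈ Finset.range n,
    gridMixedDiff ψ n i j * (Ici (gridPt n (i + 1)) ×ˢ Ici (gridPt n (j + 1))).indicator 1 p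

lemma QuasiAntitone.gridMixedDiff_nonpos (hψ : QuasiAntitone ψ) {n i j : ℕ} (hi : i < n)
    (hj : j < n) : gridMixedDiff ψ n i j ≤ 0 := by
  have := hψ _ _ _ _ (gridPt_le_gridPt i.le_succ hi) (gridPt_le_gridPt j.le_succ hj)
  unfold gridMixedDiff
  linarith

/-- Discrete form of `ψ(u,v) = ψ(u,v₀) + ψ(u₀,v) - ψ(u₀,v₀) + ∫∫_{[u₀,u]×[v₀,v]} ∂²ψ`. -/
lemma comp_gridRound_eq (ψ : ℝ → ℝ → ℝ) (n : ℕ) (u v : ℝ) :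
    ψ (gridRound n u) (gridRound n v) =
      ψ (gridRound n u) (gridPt n 0) + ψ (gridPt n 0) (gridRound n v)
        - ψ (gridPt n 0) (gridPt n 0) + gridQuadrantSum ψ n (u, v) := by
  have hrow : ∀ i ∈ Finset.range n, ∑ j ∈ Finset.range n, gridMixedDiff ψ n i j *
      (Ici (gridPt n (i + 1)) ×ˢ Ici (gridPt n (j + 1))).indicator 1 (u, v) =
      if i < gridIdx n u then ∑ j ∈ Finset.range n,
        (if j < gridIdx n v then gridMixedDiff ψ n i j else 0) else 0 := by
    intro i hi
    rw [Finset.mem_range] at hi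
    split_ifs with hiu
    · refine Finset.sum_congr rfl fun j hj => ?_
      simp [Set.indicator_apply, ← lt_gridIdx_iff hi, ← lt_gridIdx_iff (Finset.mem_range.1 hj),
        hiu]
    · refine Finset.sum_eq_zero fun j _ => ?_
      simp [← lt_gridIdx_iff hi, hiu]
  rw [gridQuadrantSum, Finset.sum_congr rfl hrow, sum_range_ite_lt _ gridIdx_le]
  simp only [sum_range_ite_lt _ gridIdx_le, gridMixedDiff]
  rw [sum_range_sum_range_mixed_diff (fun i j => ψ (gridPt n i) (gridPt n j))]
  simp only [gridRound]
  ring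

lemma integrable_gridQuadrantSum (μ : Measure (ℝ × ℝ)) [IsFiniteMeasure μ] (n : ℕ) :
    Integrable (gridQuadrantSum ψ n) μ :=
  integrable_finsetSum _ fun _ _ => integrable_finsetSum _ fun _ _ =>
    ((integrable_const (1 : ℝ)).indicator (measurableSet_Ici.prod measurableSet_Ici)).const_mul _

lemma integral_gridQuadrantSum (μ : Measure (ℝ × ℝ)) [IsFiniteMeasure μ] (n : ℕ) :
    ∫ p, gridQuadrantSum ψ n p ∂μ = ∑ i ∈ Finset.range n, ∑ j ∈ Finset.range n,
      gridMixedDiff ψ n i j * μ.real (Ici (gridPt n (i + 1)) ×ˢ Ici (gridPt n (j + 1))) := by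
  have hS (i j : ℕ) := (measurableSet_Ici (a := gridPt n (i + 1))).prod
    (measurableSet_Ici (a := gridPt n (j + 1)))
  have hint (i j : ℕ) : Integrable (fun p => gridMixedDiff ψ n i j *
      (Ici (gridPt n (i + 1)) ×ˢ Ici (gridPt n (j + 1))).indicator 1 p) μ :=
    ((integrable_const (1 : ℝ)).indicator (hS i j)).const_mul _
  unfold gridQuadrantSum
  rw [integral_finsetSum _ fun i _ => integrable_finsetSum _ fun j _ => hint i j]
  refine Finset.sum_congr rfl fun i _ => ?_
  rw [integral_finsetSum _ fun j _ => hint i j]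
  exact Finset.sum_congr rfl fun j _ => by rw [integral_const_mul, integral_indicator_one (hS i j)]

lemma QuasiAntitone.integral_gridQuadrantSum_le (hψ : QuasiAntitone ψ) {μ ν : Measure (ℝ × ℝ)}
    [IsFiniteMeasure μ] [IsFiniteMeasure ν]
    (hsurv : ∀ s t : ℝ, μ (Ici s ×ˢ Ici t) ≤ ν (Ici s ×ˢ Ici t)) (n : ℕ) :
    ∫ p, gridQuadrantSum ψ n p ∂ν ≤ ∫ p, gridQuadrantSum ψ n p ∂μ := by
  rw [integral_gridQuadrantSum, integral_gridQuadrantSum]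
  refine Finset.sum_le_sum fun i hi => Finset.sum_le_sum fun j hj => ?_
  exact mul_le_mul_of_nonpos_left (ENNReal.toReal_mono (measure_ne_top _ _) (hsurv _ _))
    (hψ.gridMixedDiff_nonpos (Finset.mem_range.1 hi) (Finset.mem_range.1 hj))

lemma ArctanLipschitzWith.abs_sub_comp_gridRound_le (hψ : ArctanLipschitzWith c ψ) (hc : 0 ≤ c)
    (n : ℕ) (u v : ℝ) :
    |ψ u v - ψ (gridRound n u) (gridRound n v)| ≤ 2 * c * gridStep n := by
  have hd : c * (dist (arctan u) (arctan (gridRound n u)) +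
      dist (arctan v) (arctan (gridRound n v))) ≤ 2 * c * gridStep n := by
    nlinarith [dist_arctan_gridRound_le n u, dist_arctan_gridRound_le n v]
  have h₁ := hψ u v (gridRound n u) (gridRound n v)
  have h₂ := hψ (gridRound n u) (gridRound n v) u v
  rw [dist_comm (arctan (gridRound n u)), dist_comm (arctan (gridRound n v))] at h₂
  rw [abs_sub_le_iff]
  constructor <;> linarith

lemma integrable_comp_of_abs_le {α : Type*} [MeasurableSpace α] {μ : Measure α}
    [IsFiniteMeasure μ] (hm : Measurable (Function.uncurry ψ)) {C : ℝ} (hC : ∀ u v, |ψ u v| ≤ C)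
    {f g : α → ℝ} (hf : Measurable f) (hg : Measurable g) :
    Integrable (fun x => ψ (f x) (g x)) μ :=
  .of_bound (hm.comp (hf.prodMk hg)).aestronglyMeasurable C (ae_of_all _ fun _ => hC _ _)

lemma integral_comp_gridRound_eq (hm : Measurable (Function.uncurry ψ)) {C : ℝ}
    (hC : ∀ u v, |ψ u v| ≤ C) (μ : Measure (ℝ × ℝ)) [IsProbabilityMeasure μ] (n : ℕ) :
    ∫ p, ψ (gridRound n p.1) (gridRound n p.2) ∂μ =
      ∫ u, ψ (gridRound n u) (gridPt n 0) ∂μ.map Prod.fst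
        + ∫ v, ψ (gridPt n 0) (gridRound n v) ∂μ.map Prod.snd - ψ (gridPt n 0) (gridPt n 0)
        + ∫ p, gridQuadrantSum ψ n p ∂μ := by
  have hr := (monotone_gridRound n).measurable
  have hA : Measurable fun u => ψ (gridRound n u) (gridPt n 0) :=
    hm.comp (hr.prodMk measurable_const)
  have hB : Measurable fun v => ψ (gridPt n 0) (gridRound n v) :=
    hm.comp (measurable_const.prodMk hr)
  have hAi : Integrable (fun p : ℝ × ℝ => ψ (gridRound n p.1) (gridPt n 0)) μ :=
    integrable_comp_of_abs_le hm hC (hr.comp measurable_fst) measurable_const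
  have hBi : Integrable (fun p : ℝ × ℝ => ψ (gridPt n 0) (gridRound n p.2)) μ :=
    integrable_comp_of_abs_le hm hC measurable_const (hr.comp measurable_snd)
  have hAB : Integrable (fun p : ℝ × ℝ =>
      ψ (gridRound n p.1) (gridPt n 0) + ψ (gridPt n 0) (gridRound n p.2)) μ := hAi.add hBi
  rw [integral_map measurable_fst.aemeasurable hA.aestronglyMeasurable,
    integral_map measurable_snd.aemeasurable hB.aestronglyMeasurable]
  simp_rw [comp_gridRound_eq ψ n, Prod.mk.eta]
  have hABK : Integrable (fun p : ℝ × ℝ => ψ (gridRound n p.1) (gridPt n 0) +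
      ψ (gridPt n 0) (gridRound n p.2) - ψ (gridPt n 0) (gridPt n 0)) μ :=
    hAB.sub (integrable_const _)
  rw [integral_add hABK (integrable_gridQuadrantSum μ n),
    integral_sub hAB (integrable_const _),
    integral_add hAi hBi, integral_const, probReal_univ, one_smul]

lemma integral_comp_gridRound_le (hψ : QuasiAntitone ψ) (hm : Measurable (Function.uncurry ψ))
    {C : ℝ} (hC : ∀ u v, |ψ u v| ≤ C) {μ ν : Measure (ℝ × ℝ)} [IsProbabilityMeasure μ]
    [IsProbabilityMeasure ν] (hfst : μ.map Prod.fst = ν.map Prod.fst)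
    (hsnd : μ.map Prod.snd = ν.map Prod.snd)
    (hsurv : ∀ s t : ℝ, μ (Ici s ×ˢ Ici t) ≤ ν (Ici s ×ˢ Ici t)) (n : ℕ) :
    ∫ p, ψ (gridRound n p.1) (gridRound n p.2) ∂ν ≤
      ∫ p, ψ (gridRound n p.1) (gridRound n p.2) ∂μ := by
  rw [integral_comp_gridRound_eq hm hC ν, integral_comp_gridRound_eq hm hC μ, hfst, hsnd]
  gcongr 1
  exact hψ.integral_gridQuadrantSum_le hsurv n

theorem integral_le_of_measure_Ici_prod_le (hψ : QuasiAntitone ψ) (hL : ArctanLipschitzWith c ψ)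
    (hc : 0 ≤ c) {μ ν : Measure (ℝ × ℝ)}
    [IsProbabilityMeasure μ] [IsProbabilityMeasure ν] (hfst : μ.map Prod.fst = ν.map Prod.fst)
    (hsnd : μ.map Prod.snd = ν.map Prod.snd)
    (hsurv : ∀ s t : ℝ, μ (Ici s ×ˢ Ici t) ≤ ν (Ici s ×ˢ Ici t)) :
    ∫ p, ψ p.1 p.2 ∂ν ≤ ∫ p, ψ p.1 p.2 ∂μ := by
  have hm := hL.continuous.measurable
  have hC := hL.abs_le hc
  have hround (μ : Measure (ℝ × ℝ)) [IsProbabilityMeasure μ] (n : ℕ) :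
      |∫ p, ψ p.1 p.2 ∂μ - ∫ p, ψ (gridRound n p.1) (gridRound n p.2) ∂μ| ≤ 2 * c * gridStep n := by
    have hr := (monotone_gridRound n).measurable
    have hround_int : Integrable (fun p : ℝ × ℝ => ψ (gridRound n p.1) (gridRound n p.2)) μ :=
      integrable_comp_of_abs_le hm hC (hr.comp measurable_fst) (hr.comp measurable_snd)
    rw [← integral_sub (integrable_comp_of_abs_le hm hC measurable_fst measurable_snd) hround_int]
    simpa using norm_integral_le_of_norm_le_const (μ := μ)
      (f := fun p => ψ p.1 p.2 - ψ (gridRound n p.1) (gridRound n p.2))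
      (ae_of_all _ fun p => hL.abs_sub_comp_gridRound_le hc n p.1 p.2)
  have hn (n : ℕ) : ∫ p, ψ p.1 p.2 ∂ν ≤ ∫ p, ψ p.1 p.2 ∂μ + 4 * c * gridStep n := by
    have := integral_comp_gridRound_le hψ hm hC hfst hsnd hsurv n
    linarith [abs_le.1 (hround μ n), abs_le.1 (hround ν n)]
  refine ge_of_tendsto' (x := atTop) ?_ hn
  simpa using tendsto_const_nhds.add (tendsto_gridStep.const_mul (4 * c))

/-- The Pasch–Hausdorff envelope of `ψ` for the bounded metric `|arctan u - arctan u'|` in each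
coordinate. -/
noncomputable def lipEnvelope (ψ : ℝ → ℝ → ℝ) (N : ℕ) (u v : ℝ) : ℝ :=
  ⨅ p : ℝ × ℝ, ψ p.1 p.2 + N * (dist (arctan u) (arctan p.1) + dist (arctan v) (arctan p.2))

lemma bddBelow_range_lipEnvelope (hψ0 : ∀ u v, 0 ≤ ψ u v) (N : ℕ) (u v : ℝ) :
    BddBelow (range fun p : ℝ × ℝ =>
      ψ p.1 p.2 + N * (dist (arctan u) (arctan p.1) + dist (arctan v) (arctan p.2))) := by
  refine ⟨0, ?_⟩
  rintro _ ⟨p, rfl⟩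
  have := hψ0 p.1 p.2
  positivity

lemma lipEnvelope_nonneg (hψ0 : ∀ u v, 0 ≤ ψ u v) (N : ℕ) (u v : ℝ) : 0 ≤ lipEnvelope ψ N u v :=
  le_ciInf fun p => by have := hψ0 p.1 p.2; positivity

lemma lipEnvelope_le (hψ0 : ∀ u v, 0 ≤ ψ u v) (N : ℕ) (u v : ℝ) : lipEnvelope ψ N u v ≤ ψ u v := by
  refine (ciInf_le (bddBelow_range_lipEnvelope hψ0 N u v) (u, v)).trans_eq ?_
  simp

lemma monotone_lipEnvelope (hψ0 : ∀ u v, 0 ≤ ψ u v) (u v : ℝ) :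
    Monotone fun N => lipEnvelope ψ N u v := fun N M hNM =>
  ciInf_mono (bddBelow_range_lipEnvelope hψ0 N u v) fun p => by gcongr

lemma arctanLipschitzWith_lipEnvelope (hψ0 : ∀ u v, 0 ≤ ψ u v) (N : ℕ) :
    ArctanLipschitzWith N (lipEnvelope ψ N) := by
  intro u v u' v'
  rw [← sub_le_iff_le_add]
  refine le_ciInf fun p => ?_
  have h := ciInf_le (bddBelow_range_lipEnvelope hψ0 N u v) p
  have h₁ := dist_triangle (arctan u) (arctan u') (arctan p.1)
  have h₂ := dist_triangle (arctan v) (arctan v') (arctan p.2)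
  have := mul_le_mul_of_nonneg_left (add_le_add h₁ h₂) (Nat.cast_nonneg (α := ℝ) N)
  rw [lipEnvelope]
  linarith

lemma quasiAntitone_lipEnvelope (hψ : QuasiAntitone ψ) (hψ0 : ∀ u v, 0 ≤ ψ u v) (N : ℕ) :
    QuasiAntitone (lipEnvelope ψ N) := by
  intro u₁ u₂ v₁ v₂ hu hv
  refine le_ciInf_add_ciInf fun p p' => ?_
  have hlow := add_le_add
    (ciInf_le (bddBelow_range_lipEnvelope hψ0 N u₁ v₁) (min p.1 p'.1, min p.2 p'.2))
    (ciInf_le (bddBelow_range_lipEnvelope hψ0 N u₂ v₂) (max p.1 p'.1, max p.2 p'.2))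
  have hψ' := hψ.min_add_max_le p.1 p'.1 p.2 p'.2
  have hu' := quasiAntitone_dist_arctan.min_add_max_le u₂ u₁ p.1 p'.1
  have hv' := quasiAntitone_dist_arctan.min_add_max_le v₁ v₂ p.2 p'.2
  rw [min_eq_right hu, max_eq_left hu] at hu'
  rw [min_eq_left hv, max_eq_right hv] at hv'
  have := mul_le_mul_of_nonneg_left (add_le_add hu' hv') (Nat.cast_nonneg (α := ℝ) N)
  refine hlow.trans ?_
  linarith

lemma le_lipEnvelope (hψ0 : ∀ u v, 0 ≤ ψ u v) {N : ℕ} {u v b δ : ℝ}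
    (hnear : ∀ a a', dist (arctan a) (arctan u) < δ → dist (arctan a') (arctan v) < δ →
      b ≤ ψ a a')
    (hfar : b ≤ N * δ) : b ≤ lipEnvelope ψ N u v := by
  refine le_ciInf fun p => ?_
  have hpen : 0 ≤ (N : ℝ) * (dist (arctan u) (arctan p.1) + dist (arctan v) (arctan p.2)) := by
    positivity
  by_cases hp : dist (arctan p.1) (arctan u) < δ ∧ dist (arctan p.2) (arctan v) < δ
  · linarith [hnear p.1 p.2 hp.1 hp.2]
  · have hδ : δ ≤ dist (arctan u) (arctan p.1) + dist (arctan v) (arctan p.2) := by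
      rw [not_and_or, not_lt, not_lt, dist_comm, dist_comm (arctan p.2)] at hp
      rcases hp with hp | hp <;> linarith [dist_nonneg (x := arctan u) (y := arctan p.1),
        dist_nonneg (x := arctan v) (y := arctan p.2)]
    have := mul_le_mul_of_nonneg_left hδ (Nat.cast_nonneg (α := ℝ) N)
    linarith [hψ0 p.1 p.2]

lemma tendsto_lipEnvelope (hψ0 : ∀ u v, 0 ≤ ψ u v) (hψ : Continuous (Function.uncurry ψ))
    (u v : ℝ) : Tendsto (fun N : ℕ => lipEnvelope ψ N u v) atTop (𝓝 (ψ u v)) := by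
  refine tendsto_order.2 ⟨fun a ha => ?_,
    fun a ha => .of_forall fun N => (lipEnvelope_le hψ0 N u v).trans_lt ha⟩
  obtain ⟨b, hab, hb⟩ := exists_between ha
  have htan (x : ℝ) : Tendsto tan (𝓝 (arctan x)) (𝓝 x) := by
    simpa [tan_arctan] using (continuousAt_tan.2 (cos_arctan_pos x).ne').tendsto
  have hlim : Tendsto (fun q : ℝ × ℝ => ψ (tan q.1) (tan q.2)) (𝓝 (arctan u, arctan v))
      (𝓝 (ψ u v)) :=
    (hψ.tendsto (u, v)).comp (((htan u).comp (continuous_fst.tendsto _)).prodMk_nhds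
      ((htan v).comp (continuous_snd.tendsto _)))
  obtain ⟨δ, hδ, hnear⟩ := Metric.eventually_nhds_iff.1 (hlim.eventually (lt_mem_nhds hb))
  obtain ⟨N, hN⟩ := exists_nat_ge (b / δ)
  refine eventually_atTop.2 ⟨N, fun M hM => hab.trans_le (le_trans ?_
    (monotone_lipEnvelope hψ0 u v hM))⟩
  refine le_lipEnvelope hψ0 (fun a a' ha ha' => ?_) ((div_le_iff₀ hδ).1 hN)
  simpa [tan_arctan] using (@hnear (arctan a, arctan a') (max_lt ha ha')).le

lemma lintegral_le_of_measure_Ici_prod_le (hψ0 : ∀ u v, 0 ≤ ψ u v) (hψ : QuasiAntitone ψ)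
    (hL : ArctanLipschitzWith c ψ) (hc : 0 ≤ c) {μ ν : Measure (ℝ × ℝ)}
    [IsProbabilityMeasure μ] [IsProbabilityMeasure ν] (hfst : μ.map Prod.fst = ν.map Prod.fst)
    (hsnd : μ.map Prod.snd = ν.map Prod.snd)
    (hsurv : ∀ s t : ℝ, μ (Ici s ×ˢ Ici t) ≤ ν (Ici s ×ˢ Ici t)) :
    ∫⁻ p, ENNReal.ofReal (ψ p.1 p.2) ∂ν ≤ ∫⁻ p, ENNReal.ofReal (ψ p.1 p.2) ∂μ := by
  have hint (μ : Measure (ℝ × ℝ)) [IsProbabilityMeasure μ] : Integrable (fun p => ψ p.1 p.2) μ :=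
    integrable_comp_of_abs_le hL.continuous.measurable (hL.abs_le hc) measurable_fst measurable_snd
  rw [← ofReal_integral_eq_lintegral_ofReal (hint ν) (.of_forall fun _ => hψ0 _ _),
    ← ofReal_integral_eq_lintegral_ofReal (hint μ) (.of_forall fun _ => hψ0 _ _)]
  exact ENNReal.ofReal_le_ofReal (integral_le_of_measure_Ici_prod_le hψ hL hc hfst hsnd hsurv)

end CostComparison

/-- let `P`, `Q` be Borel probability measures on `ℝ` and let
`ψ̃ : ℝ × ℝ → [0,∞)` be continuous and quasi-antitone (submodular). Then for
every probability measure `π` on `ℝ × ℝ` with first marginal `P` and second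
marginal `Q`,
`∫ ψ̃ dπ ≥ ∫_{(0,1)} ψ̃(F_P^←(x), F_Q^←(x)) dλ_L(x)`. -/
theorem coupling_lower_bound (P Q : Measure ℝ)
    [IsProbabilityMeasure P] [IsProbabilityMeasure Q]
    (ψ : ℝ → ℝ → ℝ) (hψ0 : ∀ u v, 0 ≤ ψ u v)
    (hψc : Continuous (fun p : ℝ × ℝ => ψ p.1 p.2))
    (hψqa : ∀ u₁ u₂ v₁ v₂ : ℝ, u₁ ≤ u₂ → v₁ ≤ v₂ →
      ψ u₁ v₁ + ψ u₂ v₂ ≤ ψ u₂ v₁ + ψ u₁ v₂)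
    (π : Measure (ℝ × ℝ)) [IsProbabilityMeasure π]
    (hπ1 : π.map Prod.fst = P) (hπ2 : π.map Prod.snd = Q) :
    ∫⁻ x in Set.Ioo (0:ℝ) 1, ENNReal.ofReal (ψ (quantileFn P x) (quantileFn Q x))
      ≤ ∫⁻ p, ENNReal.ofReal (ψ p.1 p.2) ∂π := by
  rw [← comonotoneCoupling.lintegral_eq P Q hψc.measurable.ennreal_ofReal]
  have henv (N : ℕ) : ∫⁻ p, ENNReal.ofReal (lipEnvelope ψ N p.1 p.2) ∂comonotoneCoupling P Q ≤
      ∫⁻ p, ENNReal.ofReal (ψ p.1 p.2) ∂π :=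
    (lintegral_le_of_measure_Ici_prod_le (lipEnvelope_nonneg hψ0 N)
      (quasiAntitone_lipEnvelope hψqa hψ0 N) (arctanLipschitzWith_lipEnvelope hψ0 N) N.cast_nonneg
      (hπ1.trans (comonotoneCoupling.map_fst P Q).symm)
      (hπ2.trans (comonotoneCoupling.map_snd P Q).symm)
      (comonotoneCoupling.measure_Ici_prod_Ici_le P Q hπ1 hπ2)).trans
    (lintegral_mono fun p => ENNReal.ofReal_le_ofReal (lipEnvelope_le hψ0 N p.1 p.2))
  refine le_of_tendsto' (lintegral_tendsto_of_tendsto_of_monotone (fun N => ?_)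
    (.of_forall fun p => ?_) (.of_forall fun p => ?_)) henv
  · exact (arctanLipschitzWith_lipEnvelope hψ0 N).continuous.measurable.ennreal_ofReal.aemeasurable
  · exact fun N M h => ENNReal.ofReal_le_ofReal (monotone_lipEnvelope hψ0 p.1 p.2 h)
  · exact (ENNReal.continuous_ofReal.tendsto _).comp (tendsto_lipEnvelope hψ0 hψc p.1 p.2)
end

section
/- Let φ : (0,∞) → ℝ be convex and twice continuously differentiable on (0,∞). Then the pointwise Csiszár–Ali–Silvey–Morimoto cost ψ̃(u,v) := v·φ(u/v) − v·φ(1) − φ'(1)·(u − v) is quasi-antitone on (0,∞) × (0,∞), i.e. ψ̃(u₁,v₁) + ψ̃(u₂,v₂) ≤ ψ̃(u₂,v₁) + ψ̃(u₁,v₂) whenever 0 < u₁ ≤ u₂ and 0 < v₁ ≤ v₂. -/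
open Set

/-- for `φ : (0,∞) → ℝ` convex and twice continuously
differentiable on `(0,∞)`, the pointwise Csiszár–Ali–Silvey–Morimoto cost
`ψ̃(u,v) := v·φ(u/v) − v·φ(1) − φ'(1)·(u − v)` is quasi-antitone (submodular)
on `(0,∞) × (0,∞)`:
`ψ̃(u₁,v₁) + ψ̃(u₂,v₂) ≤ ψ̃(u₂,v₁) + ψ̃(u₁,v₂)` whenever
`0 < u₁ ≤ u₂` and `0 < v₁ ≤ v₂`. -/
theorem casm_cost_quasiAntitone (φ : ℝ → ℝ)
    (hconv : ConvexOn ℝ (Set.Ioi (0:ℝ)) φ)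
    (hsmooth : ContDiffOn ℝ 2 φ (Set.Ioi (0:ℝ))) :
    ∀ u₁ u₂ v₁ v₂ : ℝ, 0 < u₁ → u₁ ≤ u₂ → 0 < v₁ → v₁ ≤ v₂ →
      (v₁ * φ (u₁ / v₁) - v₁ * φ 1 - deriv φ 1 * (u₁ - v₁))
        + (v₂ * φ (u₂ / v₂) - v₂ * φ 1 - deriv φ 1 * (u₂ - v₂))
      ≤ (v₁ * φ (u₂ / v₁) - v₁ * φ 1 - deriv φ 1 * (u₂ - v₁))
        + (v₂ * φ (u₁ / v₂) - v₂ * φ 1 - deriv φ 1 * (u₁ - v₂)) := by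
  intro u₁ u₂ v₁ v₂ hu₁ hu v₁pos hv
  rcases eq_or_lt_of_le hu with rfl | hu
  · linarith
  have hu₂ : 0 < u₂ := hu₁.trans hu
  have hv₂ : 0 < v₂ := v₁pos.trans_le hv
  set a₁ : ℝ := u₁ / v₁ with ha₁
  set b₁ : ℝ := u₂ / v₁ with hb₁
  set a₂ : ℝ := u₁ / v₂ with ha₂
  set b₂ : ℝ := u₂ / v₂ with hb₂
  have ha₁m : a₁ ∈ Set.Ioi (0:ℝ) := by rw [Set.mem_Ioi, ha₁]; positivity
  have hb₁m : b₁ ∈ Set.Ioi (0:ℝ) := by rw [Set.mem_Ioi, hb₁]; positivity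
  have ha₂m : a₂ ∈ Set.Ioi (0:ℝ) := by rw [Set.mem_Ioi, ha₂]; positivity
  have hb₂m : b₂ ∈ Set.Ioi (0:ℝ) := by rw [Set.mem_Ioi, hb₂]; positivity
  have hab₂ : a₂ < b₂ := by rw [ha₂, hb₂]; gcongr
  have hab₁ : a₁ < b₁ := by rw [ha₁, hb₁]; gcongr
  have ha₂a₁ : a₂ ≤ a₁ := by rw [ha₁, ha₂]; gcongr
  have hb₂b₁ : b₂ ≤ b₁ := by rw [hb₁, hb₂]; gcongr
  have ha₂b₁ : a₂ < b₁ := hab₂.trans_le hb₂b₁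
  have symmslope : ∀ x y : ℝ, (φ x - φ y) / (x - y) = (φ y - φ x) / (y - x) := by
    intro x y
    rw [← neg_div_neg_eq]
    ring_nf
  have h1 : (φ b₂ - φ a₂) / (b₂ - a₂) ≤ (φ b₁ - φ a₂) / (b₁ - a₂) :=
    hconv.secant_mono ha₂m hb₂m hb₁m (ne_of_gt hab₂) (ne_of_gt ha₂b₁) hb₂b₁
  have h2 : (φ a₂ - φ b₁) / (a₂ - b₁) ≤ (φ a₁ - φ b₁) / (a₁ - b₁) :=
    hconv.secant_mono hb₁m ha₂m ha₁m (ne_of_lt ha₂b₁) (ne_of_lt hab₁) ha₂a₁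
  rw [symmslope a₂ b₁, symmslope a₁ b₁] at h2
  have key : (φ b₂ - φ a₂) / (b₂ - a₂) ≤ (φ b₁ - φ a₁) / (b₁ - a₁) := h1.trans h2
  have hd : (0:ℝ) < u₂ - u₁ := by linarith
  have e₂ : b₂ - a₂ = (u₂ - u₁) / v₂ := by rw [ha₂, hb₂]; field_simp
  have e₁ : b₁ - a₁ = (u₂ - u₁) / v₁ := by rw [ha₁, hb₁]; field_simp
  have final : v₂ * (φ b₂ - φ a₂) ≤ v₁ * (φ b₁ - φ a₁) := by
    have hmul := mul_le_mul_of_nonneg_left key hd.le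
    calc v₂ * (φ b₂ - φ a₂)
        = (u₂ - u₁) * ((φ b₂ - φ a₂) / (b₂ - a₂)) := by
          rw [e₂]; field_simp
      _ ≤ (u₂ - u₁) * ((φ b₁ - φ a₁) / (b₁ - a₁)) := hmul
      _ = v₁ * (φ b₁ - φ a₁) := by rw [e₁]; field_simp
  linarith
end

section
/- (Bayes-risk bounds via power divergences.) Let P be a probability measure on (𝒳, ℬ), let f : 𝒳 → [0,∞) be measurable with ∫_𝒳 f dP = 1, let Λ_H > 0, Λ_A > 0 and χ ∈ (0,1), and set H_χ := ∫_𝒳 f^χ dP (the Hellinger integral of order χ, which equals 1 − χ(1−χ)·D where D is the power divergence of order χ between the measure with P-density f and P). Then (Λ_H^{max{1, χ/(1−χ)}} · Λ_A^{max{1, (1−χ)/χ}} / (Λ_H + Λ_A)^{max{χ/(1−χ), (1−χ)/χ}}) · H_χ^{max{1/χ, 1/(1−χ)}} ≤ ∫_𝒳 min{Λ_H·f, Λ_A} dP ≤ Λ_H^χ · Λ_A^{1−χ} · H_χ. -/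
/-! With `a = Λ_H f` and `b = Λ_A`, the upper bound integrates `min a b ≤ a^χ b^(1-χ)`.
For the lower bound put `m = min χ (1-χ)`. Pointwise
`a^χ b^(1-χ) ≤ (min a b)^m (a+b)^(1-m)`, and Hölder's inequality with exponents `1/m`,
`1/(1-m)` gives `Λ_H^χ Λ_A^(1-χ) H_χ ≤ (∫ min a b)^m (Λ_H + Λ_A)^(1-m)`, because
`∫ (a + b) dP = Λ_H + Λ_A`. Taking the `1/m`-th power yields the claim. -/

open MeasureTheory

namespace Real

lemma min_le_rpow_mul_rpow {a b t : ℝ} (ha : 0 ≤ a) (hb : 0 ≤ b) (ht0 : 0 ≤ t)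
    (ht1 : t ≤ 1) :
    min a b ≤ a ^ t * b ^ (1 - t) := by
  have hmin : 0 ≤ min a b := le_min ha hb
  calc min a b = min a b ^ t * min a b ^ (1 - t) := by
        rw [← rpow_add_of_nonneg hmin ht0 (sub_nonneg.2 ht1), add_sub_cancel, rpow_one]
    _ ≤ a ^ t * b ^ (1 - t) := by
        gcongr
        · exact min_le_left a b
        · exact min_le_right a b

lemma rpow_mul_rpow_le_rpow_mul_add_rpow_of_le {a b t m : ℝ} (ha : 0 ≤ a) (hab : a ≤ b)
    (hm : 0 ≤ m) (hmt : m ≤ t) (ht : t ≤ 1) :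
    a ^ t * b ^ (1 - t) ≤ a ^ m * (a + b) ^ (1 - m) := by
  have hb : 0 ≤ b := ha.trans hab
  calc a ^ t * b ^ (1 - t) = a ^ m * (a ^ (t - m) * b ^ (1 - t)) := by
        rw [← mul_assoc, ← rpow_add_of_nonneg ha hm (sub_nonneg.2 hmt), add_sub_cancel]
    _ ≤ a ^ m * ((a + b) ^ (t - m) * (a + b) ^ (1 - t)) := by
        gcongr <;> linarith
    _ = a ^ m * (a + b) ^ (1 - m) := by
        rw [← rpow_add_of_nonneg (add_nonneg ha hb) (sub_nonneg.2 hmt) (sub_nonneg.2 ht)]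
        ring_nf

lemma rpow_mul_rpow_le_min_rpow_mul_add_rpow {a b t m : ℝ} (ha : 0 ≤ a) (hb : 0 ≤ b)
    (hm : 0 ≤ m) (hmt : m ≤ t) (hmt' : m ≤ 1 - t) :
    a ^ t * b ^ (1 - t) ≤ min a b ^ m * (a + b) ^ (1 - m) := by
  rcases le_total a b with hab | hba
  · rw [min_eq_left hab]
    exact rpow_mul_rpow_le_rpow_mul_add_rpow_of_le ha hab hm hmt (by linarith)
  · rw [min_eq_right hba, add_comm, mul_comm]
    simpa using rpow_mul_rpow_le_rpow_mul_add_rpow_of_le hb hba hm hmt' (by linarith)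

lemma rpow_one_div_le_mul_rpow_of_le_rpow_mul_rpow {c L S m : ℝ} (hc : 0 ≤ c) (hL : 0 ≤ L)
    (hS : 0 ≤ S) (hm : 0 < m) (h : c ≤ L ^ m * S ^ (1 - m)) :
    c ^ (1 / m) ≤ L * S ^ ((1 - m) / m) :=
  calc c ^ (1 / m) ≤ (L ^ m * S ^ (1 - m)) ^ (1 / m) := rpow_le_rpow hc h (by positivity)
    _ = L * S ^ ((1 - m) / m) := by
      rw [mul_rpow (rpow_nonneg hL m) (rpow_nonneg hS _), ← rpow_mul hL, ← rpow_mul hS,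
        mul_one_div_cancel hm.ne', rpow_one, mul_one_div]

lemma max_one_div_eq_div_min {x y : ℝ} (hx : 0 < x) (hy : 0 < y) :
    max 1 (x / y) = x / min x y := by
  rcases le_total x y with h | h
  · rw [min_eq_left h, div_self hx.ne', max_eq_left ((div_le_one hy).2 h)]
  · rw [min_eq_right h, max_eq_right ((one_le_div hy).2 h)]

lemma max_div_div_eq_max_div_min {x y : ℝ} (hx : 0 < x) (hy : 0 < y) :
    max (x / y) (y / x) = max x y / min x y := by
  rcases le_total x y with h | h
  · rw [min_eq_left h, max_eq_right h,
      max_eq_right (((div_le_one hy).2 h).trans ((one_le_div hx).2 h))]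
  · rw [min_eq_right h, max_eq_left h,
      max_eq_left (((div_le_one hx).2 h).trans ((one_le_div hy).2 h))]

lemma max_one_div_one_div_eq_one_div_min {x y : ℝ} (hx : 0 < x) (hy : 0 < y) :
    max (1 / x) (1 / y) = 1 / min x y := by
  rcases le_total x y with h | h
  · rw [min_eq_left h, max_eq_left (one_div_le_one_div_of_le hx h)]
  · rw [min_eq_right h, max_eq_right (one_div_le_one_div_of_le hy h)]

lemma mul_rpow_max_le_of_le_rpow_min_mul_rpow {a b H L χ : ℝ} (ha : 0 < a) (hb : 0 < b)
    (hH : 0 ≤ H) (hL : 0 ≤ L) (hχ0 : 0 < χ) (hχ1 : χ < 1)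
    (h : a ^ χ * b ^ (1 - χ) * H ≤ L ^ min χ (1 - χ) * (a + b) ^ (1 - min χ (1 - χ))) :
    a ^ max 1 (χ / (1 - χ)) * b ^ max 1 ((1 - χ) / χ)
        / (a + b) ^ max (χ / (1 - χ)) ((1 - χ) / χ) * H ^ max (1 / χ) (1 / (1 - χ))
      ≤ L := by
  have hχ1' : 0 < 1 - χ := sub_pos.2 hχ1
  set m := min χ (1 - χ)
  have hroot := rpow_one_div_le_mul_rpow_of_le_rpow_mul_rpow (by positivity) hL
    (add_pos ha hb).le (lt_min hχ0 hχ1') h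
  rw [mul_rpow (by positivity) hH, mul_rpow (by positivity) (by positivity), ← rpow_mul ha.le,
    ← rpow_mul hb.le, mul_one_div, mul_one_div] at hroot
  have hmax : max χ (1 - χ) = 1 - m := by linarith [min_add_max χ (1 - χ)]
  rw [max_one_div_eq_div_min hχ0 hχ1', max_one_div_eq_div_min hχ1' hχ0, min_comm (1 - χ),
    max_div_div_eq_max_div_min hχ0 hχ1', hmax, max_one_div_one_div_eq_one_div_min hχ0 hχ1',
    div_mul_eq_mul_div, div_le_iff₀ (by positivity)]
  exact hroot

end Real

namespace MeasureTheory

variable {α : Type*} [MeasurableSpace α] {μ : Measure α} {u v : α → ℝ}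

lemma Integrable.rpow_mul_rpow (hu : Integrable u μ) (hv : Integrable v μ) (hu0 : 0 ≤ᵐ[μ] u)
    (hv0 : 0 ≤ᵐ[μ] v) {t : ℝ} (ht0 : 0 ≤ t) (ht1 : t ≤ 1) :
    Integrable (fun x ↦ u x ^ t * v x ^ (1 - t)) μ := by
  refine Integrable.mono' ((hu.const_mul t).add (hv.const_mul (1 - t)))
    ((hu.1.aemeasurable.pow_const t).mul (hv.1.aemeasurable.pow_const _)).aestronglyMeasurable ?_
  filter_upwards [hu0, hv0] with x hux hvx
  rw [Real.norm_of_nonneg (mul_nonneg (Real.rpow_nonneg hux _) (Real.rpow_nonneg hvx _))]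
  exact Real.geom_mean_le_arith_mean2_weighted ht0 (sub_nonneg.2 ht1) hux hvx (by ring)

lemma integral_rpow_mul_rpow_le (hu : Integrable u μ) (hv : Integrable v μ) (hu0 : 0 ≤ᵐ[μ] u)
    (hv0 : 0 ≤ᵐ[μ] v) {p q : ℝ} (hp : 0 ≤ p) (hq : 0 ≤ q) (hpq : p + q = 1) :
    ∫ x, u x ^ p * v x ^ q ∂μ ≤ (∫ x, u x ∂μ) ^ p * (∫ x, v x ∂μ) ^ q := by
  have huv0 : 0 ≤ᵐ[μ] fun x ↦ u x ^ p * v x ^ q := by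
    filter_upwards [hu0, hv0] with x hux hvx
    exact mul_nonneg (Real.rpow_nonneg hux _) (Real.rpow_nonneg hvx _)
  rw [integral_eq_lintegral_of_nonneg_ae huv0
      ((hu.1.aemeasurable.pow_const p).mul (hv.1.aemeasurable.pow_const q)).aestronglyMeasurable,
    integral_eq_lintegral_of_nonneg_ae hu0 hu.1, integral_eq_lintegral_of_nonneg_ae hv0 hv.1,
    ENNReal.toReal_rpow, ENNReal.toReal_rpow, ← ENNReal.toReal_mul]
  refine ENNReal.toReal_mono (ENNReal.mul_ne_top
    (ENNReal.rpow_ne_top_of_nonneg hp hu.lintegral_lt_top.ne)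
    (ENNReal.rpow_ne_top_of_nonneg hq hv.lintegral_lt_top.ne)) ?_
  calc ∫⁻ x, ENNReal.ofReal (u x ^ p * v x ^ q) ∂μ
      = ∫⁻ x, ENNReal.ofReal (u x) ^ p * ENNReal.ofReal (v x) ^ q ∂μ := by
        refine lintegral_congr_ae ?_
        filter_upwards [hu0, hv0] with x hux hvx
        rw [ENNReal.ofReal_mul (Real.rpow_nonneg hux _), ENNReal.ofReal_rpow_of_nonneg hux hp,
          ENNReal.ofReal_rpow_of_nonneg hvx hq]
    _ ≤ _ := ENNReal.lintegral_mul_norm_pow_le (by fun_prop) (by fun_prop) hp hq hpq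

lemma integral_min_le_integral_rpow_mul_rpow (hu : Integrable u μ) (hv : Integrable v μ)
    (hu0 : 0 ≤ᵐ[μ] u) (hv0 : 0 ≤ᵐ[μ] v) {t : ℝ} (ht0 : 0 ≤ t) (ht1 : t ≤ 1) :
    ∫ x, min (u x) (v x) ∂μ ≤ ∫ x, u x ^ t * v x ^ (1 - t) ∂μ := by
  refine integral_mono_ae (hu.inf hv) (hu.rpow_mul_rpow hv hu0 hv0 ht0 ht1) ?_
  filter_upwards [hu0, hv0] with x hux hvx
  exact Real.min_le_rpow_mul_rpow hux hvx ht0 ht1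

lemma integral_rpow_mul_rpow_le_integral_min_rpow_mul (hu : Integrable u μ) (hv : Integrable v μ)
    (hu0 : 0 ≤ᵐ[μ] u) (hv0 : 0 ≤ᵐ[μ] v) {t m : ℝ} (hm : 0 ≤ m) (hmt : m ≤ t)
    (hmt' : m ≤ 1 - t) :
    ∫ x, u x ^ t * v x ^ (1 - t) ∂μ
      ≤ (∫ x, min (u x) (v x) ∂μ) ^ m * (∫ x, u x + v x ∂μ) ^ (1 - m) := by
  have hmin0 : 0 ≤ᵐ[μ] fun x ↦ min (u x) (v x) := by
    filter_upwards [hu0, hv0] with x hux hvx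
    exact le_min hux hvx
  have hadd0 : 0 ≤ᵐ[μ] fun x ↦ u x + v x := by
    filter_upwards [hu0, hv0] with x hux hvx
    exact add_nonneg hux hvx
  calc ∫ x, u x ^ t * v x ^ (1 - t) ∂μ
      ≤ ∫ x, min (u x) (v x) ^ m * (u x + v x) ^ (1 - m) ∂μ := by
        refine integral_mono_ae (hu.rpow_mul_rpow hv hu0 hv0 (hm.trans hmt) (by linarith))
          ((hu.inf hv).rpow_mul_rpow (hu.add hv) hmin0 hadd0 hm (by linarith)) ?_
        filter_upwards [hu0, hv0] with x hux hvx
        exact Real.rpow_mul_rpow_le_min_rpow_mul_add_rpow hux hvx hm hmt hmt'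
    _ ≤ _ := integral_rpow_mul_rpow_le (hu.inf hv) (hu.add hv) hmin0 hadd0 hm (by linarith)
        (by ring)

end MeasureTheory

/-- Bayes-risk bounds via power divergences: let `P` be a
probability measure, `f : 𝒳 → [0,∞)` measurable with `∫ f dP = 1`,
`Λ_H > 0`, `Λ_A > 0`, `χ ∈ (0,1)`, and `H_χ := ∫ f^χ dP` the Hellinger integral
of order `χ`. Then
`(Λ_H^{max{1,χ/(1−χ)}}·Λ_A^{max{1,(1−χ)/χ}}/(Λ_H+Λ_A)^{max{χ/(1−χ),(1−χ)/χ}})·H_χ^{max{1/χ,1/(1−χ)}}`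
`≤ ∫ min{Λ_H·f, Λ_A} dP ≤ Λ_H^χ·Λ_A^{1−χ}·H_χ`. -/
theorem bayes_risk_bounds {𝒳 : Type*} [MeasurableSpace 𝒳]
    (P : Measure 𝒳) [IsProbabilityMeasure P]
    (f : 𝒳 → ℝ) (hf : Measurable f) (hf0 : ∀ x, 0 ≤ f x)
    (hf1 : ∫⁻ x, ENNReal.ofReal (f x) ∂P = 1)
    (ΛH ΛA χ : ℝ) (hΛH : 0 < ΛH) (hΛA : 0 < ΛA) (hχ : χ ∈ Set.Ioo (0:ℝ) 1) :
    (ΛH ^ max (1:ℝ) (χ / (1 - χ)) * ΛA ^ max (1:ℝ) ((1 - χ) / χ)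
        / (ΛH + ΛA) ^ max (χ / (1 - χ)) ((1 - χ) / χ))
      * (∫ x, f x ^ χ ∂P) ^ max (1 / χ) (1 / (1 - χ))
      ≤ ∫ x, min (ΛH * f x) ΛA ∂P
    ∧ ∫ x, min (ΛH * f x) ΛA ∂P ≤ ΛH ^ χ * ΛA ^ (1 - χ) * ∫ x, f x ^ χ ∂P := by
  obtain ⟨hχ0, hχ1⟩ := hχ
  have hf_int : Integrable f P :=
    (lintegral_ofReal_ne_top_iff_integrable hf.aestronglyMeasurable (ae_of_all _ hf0)).1
      (by simp [hf1])
  have hu : Integrable (fun x ↦ ΛH * f x) P := hf_int.const_mul ΛH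
  have hu0 : 0 ≤ᵐ[P] fun x ↦ ΛH * f x := ae_of_all _ fun x ↦ mul_nonneg hΛH.le (hf0 x)
  have hv0 : 0 ≤ᵐ[P] fun _ ↦ ΛA := ae_of_all _ fun _ ↦ hΛA.le
  have hH : ∫ x, (ΛH * f x) ^ χ * ΛA ^ (1 - χ) ∂P
      = ΛH ^ χ * ΛA ^ (1 - χ) * ∫ x, f x ^ χ ∂P := by
    rw [← integral_const_mul]
    congr 1 with x
    rw [Real.mul_rpow hΛH.le (hf0 x)]
    ring
  have hsum : ∫ x, ΛH * f x + ΛA ∂P = ΛH + ΛA := by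
    rw [integral_add hu (integrable_const ΛA), integral_const_mul,
      integral_eq_lintegral_of_nonneg_ae (ae_of_all _ hf0) hf.aestronglyMeasurable, hf1]
    simp
  refine ⟨?_, hH ▸ integral_min_le_integral_rpow_mul_rpow hu (integrable_const ΛA) hu0 hv0
    hχ0.le hχ1.le⟩
  have hholder := integral_rpow_mul_rpow_le_integral_min_rpow_mul hu (integrable_const ΛA)
    hu0 hv0 (le_min hχ0.le (sub_pos.2 hχ1).le) (min_le_left _ _) (min_le_right _ _)
  rw [hH, hsum] at hholder
  exact Real.mul_rpow_max_le_of_le_rpow_min_mul_rpow hΛH hΛA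
    (integral_nonneg fun x ↦ Real.rpow_nonneg (hf0 x) χ)
    (integral_nonneg fun x ↦ le_min (mul_nonneg hΛH.le (hf0 x)) hΛA.le) hχ0 hχ1 hholder
end
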